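/- arXiv:2403.04721 — 10 statements merged into one kernel-verified Lean document; each statement's English description precedes it below -/
import Mathlib

section
/- Suppose every difference γ - γ' of distinct points of Γ makes angle less than θ₀ with the line spanned by P_V e_{j₀}, in the sense that |⟨γ - γ', e_{j₀}⟩| > (√6/3)·|γ - γ'|·cos θ₀. Then for every j ∈ {1,2,3} and all γ, γ' ∈ Γ one has |⟨γ - γ', e_j⟩| ≥ δ₀·|γ - γ'|, where δ₀ = (√6/3)·cos(θ₀ + π/3). -/
/-!
Write `x = γ - γ'` and `s = (√6/3)‖x‖`. For `j = j₀` the claim is the hypothesis, since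
`cos (θ₀ + π/3) ≤ cos θ₀`. For `j ≠ j₀`, put `a = x j₀` and `b = x j`; because the coordinates of `x`
sum to zero, `(a + 2b)² = 3(s² - a²)`, and the hypothesis `s cos θ₀ < |a|` turns this into
`|a + 2b| ≤ √3 s sin θ₀`. Hence `2|b| ≥ |a| - |a + 2b| ≥ s (cos θ₀ - √3 sin θ₀) = 2 s cos (θ₀ + π/3)`.
-/

open Real

theorem EuclideanSpace.norm_sq_eq_of_sum_eq_zero {x : EuclideanSpace ℝ (Fin 3)}
    (hx : x 0 + x 1 + x 2 = 0) {i j : Fin 3} (hij : i ≠ j) :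
    ‖x‖ ^ 2 = x i ^ 2 + x j ^ 2 + (x i + x j) ^ 2 := by
  have h2 : x 2 = -(x 0 + x 1) := by linarith
  rw [EuclideanSpace.real_norm_sq_eq, Fin.sum_univ_three]
  fin_cases i <;> fin_cases j <;> simp [h2] at hij ⊢ <;> ring

theorem EuclideanSpace.sq_add_two_mul_eq_of_sum_eq_zero {x : EuclideanSpace ℝ (Fin 3)}
    (hx : x 0 + x 1 + x 2 = 0) {i j : Fin 3} (hij : i ≠ j) :
    (x i + 2 * x j) ^ 2 = 3 * ((√6 / 3 * ‖x‖) ^ 2 - x i ^ 2) := by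
  rw [mul_pow, div_pow, sq_sqrt (by norm_num), norm_sq_eq_of_sum_eq_zero hx hij]
  ring

theorem Real.mul_cos_add_pi_div_three_le_abs {s a b θ : ℝ} (hs : 0 ≤ s) (hθ₀ : 0 ≤ θ)
    (hθ : θ ≤ π / 2) (hab : (a + 2 * b) ^ 2 = 3 * (s ^ 2 - a ^ 2)) (ha : s * cos θ < |a|) :
    s * cos (θ + π / 3) ≤ |b| := by
  have hcos : 0 ≤ cos θ := cos_nonneg_of_mem_Icc ⟨by linarith [pi_pos], hθ⟩
  have hsin : 0 ≤ sin θ := sin_nonneg_of_nonneg_of_le_pi hθ₀ (by linarith [pi_pos])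
  have hsq : (s * cos θ) ^ 2 ≤ a ^ 2 := by
    rw [← sq_abs a]
    exact pow_le_pow_left₀ (by positivity) ha.le 2
  have hab_le : |a + 2 * b| ≤ √3 * s * sin θ := by
    refine abs_le_of_sq_le_sq ?_ (by positivity)
    rw [hab, mul_pow, mul_pow, sq_sqrt (by norm_num), sin_sq]
    linarith
  have htri : |a| - |a + 2 * b| ≤ 2 * |b| := by
    calc |a| - |a + 2 * b| ≤ |a - (a + 2 * b)| := abs_sub_abs_le_abs_sub _ _
      _ = 2 * |b| := by rw [show a - (a + 2 * b) = -2 * b by ring, abs_mul]; norm_num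
  have hcos_add : 2 * cos (θ + π / 3) = cos θ - √3 * sin θ := by
    rw [cos_add, cos_pi_div_three, sin_pi_div_three]
    ring
  linear_combination (s / 2) * hcos_add + ha / 2 + hab_le / 2 + htri / 2

/-- If all differences of distinct points of Γ make angle less than `θ₀ < π/6` with the
line spanned by `P_V e_{j₀}`, then for every coordinate `j` one has
`|⟨γ-γ', e_j⟩| ≥ (√6/3)·cos(θ₀ + π/3)·|γ-γ'|`. -/
theorem away_from_degenerate_directions (θ₀ : ℝ) (hθ0 : 0 ≤ θ₀)
    (hθ6 : θ₀ < Real.pi / 6) (j₀ : Fin 3)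
    (Γ : Set (EuclideanSpace ℝ (Fin 3)))
    (hΓV : Γ ⊆ {ξ : EuclideanSpace ℝ (Fin 3) | ξ 0 + ξ 1 + ξ 2 = 0})
    (hcone : ∀ γ ∈ Γ, ∀ γ' ∈ Γ, γ ≠ γ' →
      Real.sqrt 6 / 3 * ‖γ - γ'‖ * Real.cos θ₀ < |(γ - γ') j₀|) :
    ∀ j : Fin 3, ∀ γ ∈ Γ, ∀ γ' ∈ Γ,
      Real.sqrt 6 / 3 * Real.cos (θ₀ + Real.pi / 3) * ‖γ - γ'‖ ≤ |(γ - γ') j| := by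
  intro j γ hγ γ' hγ'
  rcases eq_or_ne γ γ' with rfl | hne
  · simp
  have ha := hcone γ hγ γ' hγ' hne
  have hx : (γ - γ') 0 + (γ - γ') 1 + (γ - γ') 2 = 0 := by
    have h : γ 0 + γ 1 + γ 2 = 0 := hΓV hγ
    have h' : γ' 0 + γ' 1 + γ' 2 = 0 := hΓV hγ'
    simp only [PiLp.sub_apply]
    linarith
  have hs : 0 ≤ √6 / 3 * ‖γ - γ'‖ := by positivity
  rw [mul_right_comm]
  rcases eq_or_ne j j₀ with rfl | hj
  · have hcos : cos (θ₀ + π / 3) ≤ cos θ₀ :=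
      cos_le_cos_of_nonneg_of_le_pi hθ0 (by linarith) (by linarith)
    exact (mul_le_mul_of_nonneg_left hcos hs).trans ha.le
  · exact mul_cos_add_pi_div_three_le_abs hs hθ0 (by linarith)
      (EuclideanSpace.sq_add_two_mul_eq_of_sum_eq_zero hx hj.symm) ha
end

section
/- Let γ, γ', γ'' ∈ Γ with γ_j ≤ γ'_j ≤ γ''_j for some coordinate j. Then δ₁·|γ'' - γ'| ≤ |γ'' - γ| - |γ' - γ| for any constant 0 < δ₁ ≤ 1/2. -/
open scoped RealInnerProductSpace

private lemma lemA (x y z : ℝ) (hsum : x + y + z = 0)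
    (hq : x^2 + y^2 + z^2 < 2 * x^2) : x * y < 0 := by
  have hz : z = -(x + y) := by linarith
  subst hz
  nlinarith [sq_nonneg y]

private lemma lemB (x y z u v w s t : ℝ)
    (hx : x + y + z = 0) (hu : u + v + w = 0)
    (hqx : x^2 + y^2 + z^2 ≤ 2 * x^2) (hqu : u^2 + v^2 + w^2 ≤ 2 * u^2)
    (hx0 : x ≤ 0) (hu0 : 0 ≤ u)
    (hs : s^2 = x^2 + y^2 + z^2) (ht : t^2 = u^2 + v^2 + w^2)
    (hs0 : 0 ≤ s) (ht0 : 0 ≤ t) :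
    x * u + y * v + z * w ≤ -(1/2) * (s * t) := by
  have hst : 0 ≤ s * t := mul_nonneg hs0 ht0
  have h1 : s^2 ≤ 2 * x^2 := by linarith
  have h2 : t^2 ≤ 2 * u^2 := by linarith
  have hyz : (y + z)^2 = x^2 := by rw [show y + z = -x by linarith]; ring
  have hvw : (v + w)^2 = u^2 := by rw [show v + w = -u by linarith]; ring
  have h3 : 2*(y - z)^2 ≤ s^2 := by nlinarith [hyz, hs, h1]
  have h3' : 2*(v - w)^2 ≤ t^2 := by nlinarith [hvw, ht, h2]
  have hxu0 : 0 ≤ -(2*(x*u)) := by nlinarith [mul_nonneg (neg_nonneg.2 hx0) hu0]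
  have h4 : s*t ≤ -(2*(x*u)) := by
    refine le_of_pow_le_pow_left₀ two_ne_zero hxu0 ?_
    nlinarith [mul_le_mul h1 h2 (sq_nonneg t) (by positivity : (0:ℝ) ≤ 2*x^2)]
  have h5 : 2*((y - z)*(v - w)) ≤ s*t := by
    have habs : |2*((y - z)*(v - w))| ≤ s*t := by
      refine le_of_pow_le_pow_left₀ two_ne_zero hst ?_
      rw [sq_abs]
      nlinarith [mul_le_mul h3 h3' (by positivity : (0:ℝ) ≤ 2*(v-w)^2)
        (by linarith [sq_nonneg s] : (0:ℝ) ≤ s^2)]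
    linarith [le_abs_self (2*((y - z)*(v - w)))]
  have hid : x * u + y * v + z * w = 3/2*(x*u) + 1/2*((y - z)*(v - w)) := by
    rw [show x = -(y+z) by linarith, show u = -(v+w) by linarith]; ring
  rw [hid]; linarith

private lemma coord_sign (d : EuclideanSpace ℝ (Fin 3))
    (hsum : d 0 + d 1 + d 2 = 0) (j₀ j : Fin 3) (hne : j ≠ j₀)
    (hq : d 0^2 + d 1^2 + d 2^2 < 2 * (d j₀)^2) : d j₀ * d j < 0 := by
  fin_cases j₀ <;> fin_cases j <;>
    first
    | exact absurd rfl hne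
    | (have hq' : d 0^2 + d 1^2 + d 2^2 < 2 * (d 0)^2 := hq
       first
       | exact lemA (d 0) (d 1) (d 2) hsum hq'
       | exact lemA (d 0) (d 2) (d 1) (by linarith) (by linarith))
    | (have hq' : d 0^2 + d 1^2 + d 2^2 < 2 * (d 1)^2 := hq
       first
       | exact lemA (d 1) (d 0) (d 2) (by linarith) (by linarith)
       | exact lemA (d 1) (d 2) (d 0) (by linarith) (by linarith))
    | (have hq' : d 0^2 + d 1^2 + d 2^2 < 2 * (d 2)^2 := hq
       first
       | exact lemA (d 2) (d 0) (d 1) (by linarith) (by linarith)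
       | exact lemA (d 2) (d 1) (d 0) (by linarith) (by linarith))

private lemma norm_sq_coords (d : EuclideanSpace ℝ (Fin 3)) :
    ‖d‖^2 = d 0^2 + d 1^2 + d 2^2 := by
  rw [EuclideanSpace.norm_eq, Real.sq_sqrt (by positivity)]
  simp [Fin.sum_univ_three, sq_abs]

private lemma inner_bound (a c : EuclideanSpace ℝ (Fin 3)) (j₀ : Fin 3)
    (hsa : a 0 + a 1 + a 2 = 0) (hsc : c 0 + c 1 + c 2 = 0)
    (hqa : a 0^2 + a 1^2 + a 2^2 ≤ 2 * (a j₀)^2)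
    (hqc : c 0^2 + c 1^2 + c 2^2 ≤ 2 * (c j₀)^2)
    (hsign : (a j₀ ≤ 0 ∧ 0 ≤ c j₀) ∨ (c j₀ ≤ 0 ∧ 0 ≤ a j₀)) :
    a 0 * c 0 + a 1 * c 1 + a 2 * c 2 ≤ -(1/2) * (‖a‖ * ‖c‖) := by
  have hna := norm_sq_coords a
  have hnc := norm_sq_coords c
  have hna0 := norm_nonneg a
  have hnc0 := norm_nonneg c
  fin_cases j₀
  · have hqa' : a 0^2 + a 1^2 + a 2^2 ≤ 2 * (a 0)^2 := hqa
    have hqc' : c 0^2 + c 1^2 + c 2^2 ≤ 2 * (c 0)^2 := hqc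
    rcases hsign with ⟨hA, hC⟩ | ⟨hC, hA⟩
    · have hA' : a 0 ≤ 0 := hA; have hC' : 0 ≤ c 0 := hC
      linarith [lemB (a 0) (a 1) (a 2) (c 0) (c 1) (c 2) ‖a‖ ‖c‖ hsa hsc
        hqa' hqc' hA' hC' hna hnc hna0 hnc0]
    · have hC' : c 0 ≤ 0 := hC; have hA' : 0 ≤ a 0 := hA
      linarith [lemB (c 0) (c 1) (c 2) (a 0) (a 1) (a 2) ‖c‖ ‖a‖ hsc hsa
        hqc' hqa' hC' hA' hnc hna hnc0 hna0]
  · have hqa' : a 0^2 + a 1^2 + a 2^2 ≤ 2 * (a 1)^2 := hqa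
    have hqc' : c 0^2 + c 1^2 + c 2^2 ≤ 2 * (c 1)^2 := hqc
    rcases hsign with ⟨hA, hC⟩ | ⟨hC, hA⟩
    · have hA' : a 1 ≤ 0 := hA; have hC' : 0 ≤ c 1 := hC
      linarith [lemB (a 1) (a 0) (a 2) (c 1) (c 0) (c 2) ‖a‖ ‖c‖
        (by linarith) (by linarith) (by linarith) (by linarith) hA' hC'
        (by linarith) (by linarith) hna0 hnc0]
    · have hC' : c 1 ≤ 0 := hC; have hA' : 0 ≤ a 1 := hA
      linarith [lemB (c 1) (c 0) (c 2) (a 1) (a 0) (a 2) ‖c‖ ‖a‖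
        (by linarith) (by linarith) (by linarith) (by linarith) hC' hA'
        (by linarith) (by linarith) hnc0 hna0]
  · have hqa' : a 0^2 + a 1^2 + a 2^2 ≤ 2 * (a 2)^2 := hqa
    have hqc' : c 0^2 + c 1^2 + c 2^2 ≤ 2 * (c 2)^2 := hqc
    rcases hsign with ⟨hA, hC⟩ | ⟨hC, hA⟩
    · have hA' : a 2 ≤ 0 := hA; have hC' : 0 ≤ c 2 := hC
      linarith [lemB (a 2) (a 0) (a 1) (c 2) (c 0) (c 1) ‖a‖ ‖c‖
        (by linarith) (by linarith) (by linarith) (by linarith) hA' hC'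
        (by linarith) (by linarith) hna0 hnc0]
    · have hC' : c 2 ≤ 0 := hC; have hA' : 0 ≤ a 2 := hA
      linarith [lemB (c 2) (c 0) (c 1) (a 2) (a 0) (a 1) ‖c‖ ‖a‖
        (by linarith) (by linarith) (by linarith) (by linarith) hC' hA'
        (by linarith) (by linarith) hnc0 hna0]

set_option maxHeartbeats 1000000 in
/-- Order-distance inequality on the Lipschitz singular set: if `γ_j ≤ γ'_j ≤ γ''_j`
then `δ₁·|γ''-γ'| ≤ |γ''-γ| - |γ'-γ|` for any `0 < δ₁ ≤ 1/2`. -/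
theorem order_distance_inequality (θ₀ : ℝ) (hθ0 : 0 ≤ θ₀)
    (hθ6 : θ₀ < Real.pi / 6) (j₀ : Fin 3)
    (Γ : Set (EuclideanSpace ℝ (Fin 3)))
    (hΓV : Γ ⊆ {ξ : EuclideanSpace ℝ (Fin 3) | ξ 0 + ξ 1 + ξ 2 = 0})
    (hcone : ∀ γ ∈ Γ, ∀ γ' ∈ Γ, γ ≠ γ' →
      Real.sqrt 6 / 3 * ‖γ - γ'‖ * Real.cos θ₀ < |(γ - γ') j₀|)
    (δ₁ : ℝ) (hδ₁0 : 0 < δ₁) (hδ₁half : δ₁ ≤ 1 / 2)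
    (γ γ' γ'' : EuclideanSpace ℝ (Fin 3))
    (hγ : γ ∈ Γ) (hγ' : γ' ∈ Γ) (hγ'' : γ'' ∈ Γ)
    (j : Fin 3) (h1 : γ j ≤ γ' j) (h2 : γ' j ≤ γ'' j) :
    δ₁ * ‖γ'' - γ'‖ ≤ ‖γ'' - γ‖ - ‖γ' - γ‖ := by
  by_cases hbc : γ' = γ''
  · subst hbc; simp
  by_cases hab : γ = γ'
  · subst hab
    simp only [sub_self, norm_zero, sub_zero]
    nlinarith [norm_nonneg (γ'' - γ)]
  have hcos : Real.sqrt 3 / 2 ≤ Real.cos θ₀ := by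
    rw [← Real.cos_pi_div_six]
    exact Real.cos_le_cos_of_nonneg_of_le_pi hθ0 (by linarith [Real.pi_pos]) hθ6.le
  -- quadratic form of the cone condition
  have key : ∀ p ∈ Γ, ∀ q ∈ Γ, p ≠ q →
      (p - q) 0^2 + (p - q) 1^2 + (p - q) 2^2 < 2 * ((p - q) j₀)^2 := by
    intro p hp q hq hpq
    have hc := hcone p hp q hq hpq
    have hN : (0:ℝ) ≤ ‖p - q‖ := norm_nonneg _
    have h6 : (0:ℝ) ≤ Real.sqrt 6 := Real.sqrt_nonneg 6
    have h3 : (0:ℝ) ≤ Real.sqrt 3 := Real.sqrt_nonneg 3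
    have hsq6 : Real.sqrt 6 ^ 2 = 6 := Real.sq_sqrt (by norm_num)
    have hsq3 : Real.sqrt 3 ^ 2 = 3 := Real.sq_sqrt (by norm_num)
    have hB : Real.sqrt 6 * Real.sqrt 3 / 6 * ‖p - q‖ ≤
        Real.sqrt 6 / 3 * ‖p - q‖ * Real.cos θ₀ := by
      nlinarith [mul_le_mul_of_nonneg_left hcos
        (by positivity : (0:ℝ) ≤ Real.sqrt 6 / 3 * ‖p - q‖)]
    have hB' : Real.sqrt 6 * Real.sqrt 3 / 6 * ‖p - q‖ < |(p - q) j₀| :=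
      lt_of_le_of_lt hB hc
    have hB0 : (0:ℝ) ≤ Real.sqrt 6 * Real.sqrt 3 / 6 * ‖p - q‖ := by positivity
    have hhalf : (Real.sqrt 6 * Real.sqrt 3 / 6)^2 = 1/2 := by
      rw [div_pow, mul_pow, hsq6, hsq3]; norm_num
    have hB2 : 2 * (Real.sqrt 6 * Real.sqrt 3 / 6 * ‖p - q‖)^2 = ‖p - q‖^2 := by
      linear_combination (2 * ‖p - q‖^2) * hhalf
    have hAB : 2 * (Real.sqrt 6 * Real.sqrt 3 / 6 * ‖p - q‖)^2 < 2 * ((p - q) j₀)^2 := by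
      nlinarith [sq_abs ((p - q) j₀), hB', hB0]
    have hnorm := norm_sq_coords (p - q)
    nlinarith [hAB, hB2, hnorm]
  have hsuma : (γ - γ') 0 + (γ - γ') 1 + (γ - γ') 2 = 0 := by
    have h := hΓV hγ; have h' := hΓV hγ'
    simp only [Set.mem_setOf_eq] at h h'
    show (γ 0 - γ' 0) + (γ 1 - γ' 1) + (γ 2 - γ' 2) = 0
    linarith
  have hsumc : (γ'' - γ') 0 + (γ'' - γ') 1 + (γ'' - γ') 2 = 0 := by
    have h := hΓV hγ''; have h' := hΓV hγ'
    simp only [Set.mem_setOf_eq] at h h'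
    show (γ'' 0 - γ' 0) + (γ'' 1 - γ' 1) + (γ'' 2 - γ' 2) = 0
    linarith
  have hqa : (γ - γ') 0^2 + (γ - γ') 1^2 + (γ - γ') 2^2 < 2 * ((γ - γ') j₀)^2 :=
    key γ hγ γ' hγ' hab
  have hqc : (γ'' - γ') 0^2 + (γ'' - γ') 1^2 + (γ'' - γ') 2^2 < 2 * ((γ'' - γ') j₀)^2 :=
    key γ'' hγ'' γ' hγ' (fun h => hbc h.symm)
  have haj : (γ - γ') j ≤ 0 := by show γ j - γ' j ≤ 0; linarith
  have hcj : 0 ≤ (γ'' - γ') j := by show 0 ≤ γ'' j - γ' j; linarith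
  have hsign : ((γ - γ') j₀ ≤ 0 ∧ 0 ≤ (γ'' - γ') j₀) ∨
      ((γ'' - γ') j₀ ≤ 0 ∧ 0 ≤ (γ - γ') j₀) := by
    by_cases hj : j = j₀
    · subst hj; exact Or.inl ⟨haj, hcj⟩
    · have hA := coord_sign (γ - γ') hsuma j₀ j hj hqa
      have hC := coord_sign (γ'' - γ') hsumc j₀ j hj hqc
      right
      constructor
      · rcases le_or_gt ((γ'' - γ') j₀) 0 with h | h
        · exact h
        · exfalso; nlinarith
      · rcases le_or_gt 0 ((γ - γ') j₀) with h | h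
        · exact h
        · exfalso; nlinarith
  have hinner : ⟪γ - γ', γ'' - γ'⟫ ≤ -(1/2) * (‖γ - γ'‖ * ‖γ'' - γ'‖) := by
    have hexp : ⟪γ - γ', γ'' - γ'⟫ =
        (γ - γ') 0 * (γ'' - γ') 0 + (γ - γ') 1 * (γ'' - γ') 1 +
          (γ - γ') 2 * (γ'' - γ') 2 := by
      simp [PiLp.inner_apply, RCLike.inner_apply, Fin.sum_univ_three]
      ring
    rw [hexp]
    exact inner_bound (γ - γ') (γ'' - γ') j₀ hsuma hsumc hqa.le hqc.le hsign
  have hca : (γ'' - γ') - (γ - γ') = γ'' - γ := by abel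
  have hnorm : ‖γ'' - γ‖^2 = ‖γ'' - γ'‖^2 - 2*⟪γ'' - γ', γ - γ'⟫ + ‖γ - γ'‖^2 := by
    rw [← hca]; exact norm_sub_sq_real (γ'' - γ') (γ - γ')
  have hcomm : ⟪γ'' - γ', γ - γ'⟫ = ⟪γ - γ', γ'' - γ'⟫ := real_inner_comm _ _
  have hfin1 : (‖γ - γ'‖ + ‖γ'' - γ'‖/2)^2 ≤ ‖γ'' - γ‖^2 := by
    rw [hnorm, hcomm]
    nlinarith [hinner, sq_nonneg ‖γ'' - γ'‖]
  have hfin2 : ‖γ - γ'‖ + ‖γ'' - γ'‖/2 ≤ ‖γ'' - γ‖ :=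
    le_of_pow_le_pow_left₀ two_ne_zero (norm_nonneg _) hfin1
  have hrev : ‖γ' - γ‖ = ‖γ - γ'‖ := norm_sub_rev γ' γ
  have hc0 : (0:ℝ) ≤ ‖γ'' - γ'‖ := norm_nonneg _
  have hhalf : δ₁ * ‖γ'' - γ'‖ ≤ ‖γ'' - γ'‖/2 := by nlinarith
  linarith
end

section
/- For every x ∈ V \ Γ and every multi-index α, the function X_Γ satisfies |∂^α X_Γ(x)| ≤ C_α · d_Γ(x)^{-|α|}, where C_α depends only on α, ε, and the C^{|α|} norm of χ. -/
open Metric MeasureTheory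
open scoped MeasureTheory NNReal ENNReal

section Aux

variable {E F : Type*} [NormedAddCommGroup E] [NormedSpace ℝ E]
  [NormedAddCommGroup F] [NormedSpace ℝ F]

theorem fderiv_comp_const_add' (f : E → F) (a x : E) :
    fderiv ℝ (fun y => f (a + y)) x = fderiv ℝ f (a + x) := by
  by_cases h : DifferentiableAt ℝ f (a + x)
  · have h1 : HasFDerivAt (fun y : E => a + y) (ContinuousLinearMap.id ℝ E) x := by
      simpa using (hasFDerivAt_id x).const_add a
    have h2 := h.hasFDerivAt.comp x h1
    simpa [Function.comp_def] using h2.fderiv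
  · have h2 : ¬ DifferentiableAt ℝ (fun y => f (a + y)) x := by
      intro hd
      have h3 : DifferentiableAt ℝ (fun y : E => -a + y) (a + x) :=
        (differentiable_id.const_add (-a)).differentiableAt
      have h4 : DifferentiableAt ℝ ((fun y => f (a + y)) ∘ fun y : E => -a + y) (a + x) :=
        DifferentiableAt.comp _ (by rwa [neg_add_cancel_left]) h3
      apply h
      have h5 : ((fun y => f (a + y)) ∘ fun y : E => -a + y) = f := by
        funext y; simp
      rwa [h5] at h4
    rw [fderiv_zero_of_not_differentiableAt h, fderiv_zero_of_not_differentiableAt h2]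

theorem iteratedFDeriv_comp_const_add' (f : E → F) (a : E) (n : ℕ) :
    ∀ x : E, iteratedFDeriv ℝ n (fun y => f (a + y)) x = iteratedFDeriv ℝ n f (a + x) := by
  induction n with
  | zero => intro x; ext m; simp
  | succ n ih =>
    intro x
    have hfun : iteratedFDeriv ℝ n (fun y => f (a + y)) =
        fun y => iteratedFDeriv ℝ n f (a + y) := funext fun y => ih y
    have h1 := congrFun (iteratedFDeriv_succ_eq_comp_left
      (𝕜 := ℝ) (f := fun y => f (a + y)) (n := n)) x
    have h2 := congrFun (iteratedFDeriv_succ_eq_comp_left (𝕜 := ℝ) (f := f) (n := n)) (a + x)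
    rw [h1, h2]
    simp only [Function.comp_apply]
    congr 1
    rw [hfun]
    exact fderiv_comp_const_add' (iteratedFDeriv ℝ n f) a x

theorem compCLM_smul_id (n : ℕ) (m : ContinuousMultilinearMap ℝ (fun _ : Fin n => E) ℝ) (t : ℝ) :
    m.compContinuousLinearMap (fun _ => t • ContinuousLinearMap.id ℝ E) = t ^ n • m := by
  ext v
  simp only [ContinuousMultilinearMap.compContinuousLinearMap_apply,
    ContinuousLinearMap.smul_apply, ContinuousLinearMap.id_apply,
    ContinuousMultilinearMap.smul_apply]
  rw [m.map_smul_univ (fun _ => t) v]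
  simp [Finset.prod_const]

theorem iter_smul_comp (χ : E → ℝ) (hχ : ContDiff ℝ (⊤ : ℕ∞) χ) (s c : ℝ) (b : E) (n : ℕ) (z : E) :
    iteratedFDeriv ℝ n (fun w => s • χ (c • (b - w))) z
      = (s * (-c) ^ n) • iteratedFDeriv ℝ n χ (c • (b - z)) := by
  have hshift : ContDiff ℝ (⊤ : ℕ∞) (fun y : E => χ (c • b + y)) :=
    hχ.comp (contDiff_const.add contDiff_id)
  have hcomp : ContDiff ℝ (⊤ : ℕ∞) (fun w : E => χ (c • (b - w))) :=
    hχ.comp ((contDiff_const.sub contDiff_id).const_smul c)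
  rw [iteratedFDeriv_const_smul_apply' (hcomp.of_le (by exact_mod_cast le_top)).contDiffAt]
  have heq : (fun w : E => χ (c • (b - w)))
      = (fun y : E => χ (c • b + y)) ∘ ⇑((-c) • ContinuousLinearMap.id ℝ E) := by
    funext w
    simp [smul_sub, sub_eq_add_neg, neg_smul]
  rw [heq, ContinuousLinearMap.iteratedFDeriv_comp_right _ hshift _ (by exact_mod_cast le_top)]
  rw [iteratedFDeriv_comp_const_add' χ (c • b) n _]
  rw [compCLM_smul_id]
  have harg : c • b + ((-c) • ContinuousLinearMap.id ℝ E) z = c • (b - z) := by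
    simp [smul_sub, sub_eq_add_neg, neg_smul]
  rw [harg, smul_smul]

theorem euclid_coord_le (u : EuclideanSpace ℝ (Fin 3)) (i : Fin 3) : |u i| ≤ ‖u‖ := by
  rw [EuclideanSpace.norm_eq]
  have h1 : |u i| = Real.sqrt ((u i) ^ 2) := (Real.sqrt_sq_eq_abs _).symm
  rw [h1]
  apply Real.sqrt_le_sqrt
  have := Finset.single_le_sum (f := fun j => ‖u j‖ ^ 2)
    (fun j _ => sq_nonneg _) (Finset.mem_univ i)
  simpa [Real.norm_eq_abs, sq_abs] using this

theorem plane_ball_measure (x : EuclideanSpace ℝ (Fin 3)) (hx : x 0 + x 1 + x 2 = 0)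
    {r : ℝ} (hr : 0 ≤ r) :
    μH[2] ({ξ : EuclideanSpace ℝ (Fin 3) | ξ 0 + ξ 1 + ξ 2 = 0} ∩ Metric.closedBall x r)
      ≤ ENNReal.ofReal (64 * r ^ 2) := by
  classical
  set e1 : EuclideanSpace ℝ (Fin 3) := (WithLp.equiv 2 (Fin 3 → ℝ)).symm ![1, -1, 0] with he1
  set e2 : EuclideanSpace ℝ (Fin 3) := (WithLp.equiv 2 (Fin 3 → ℝ)).symm ![0, 1, -1] with he2
  set f : (Fin 2 → ℝ) → EuclideanSpace ℝ (Fin 3) :=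
    fun v => x + v 0 • e1 + v 1 • e2 with hf
  have he1c : ∀ i : Fin 3, e1 i = ![(1:ℝ), -1, 0] i := fun i => rfl
  have he2c : ∀ i : Fin 3, e2 i = ![(0:ℝ), 1, -1] i := fun i => rfl
  have hsqrt2 : Real.sqrt 2 ≤ 2 := by
    nlinarith [Real.sq_sqrt (show (0:ℝ) ≤ 2 by norm_num), Real.sqrt_nonneg 2]
  have hn1 : ‖e1‖ ≤ 2 := by
    rw [EuclideanSpace.norm_eq]
    have : ∑ i : Fin 3, ‖e1 i‖ ^ 2 = 2 := by
      rw [Fin.sum_univ_three]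
      simp [he1c, Real.norm_eq_abs]
      norm_num
    rw [this]; exact hsqrt2
  have hn2 : ‖e2‖ ≤ 2 := by
    rw [EuclideanSpace.norm_eq]
    have : ∑ i : Fin 3, ‖e2 i‖ ^ 2 = 2 := by
      rw [Fin.sum_univ_three]
      simp [he2c, Real.norm_eq_abs]
      norm_num
    rw [this]; exact hsqrt2
  have hlip : LipschitzWith 4 f := by
    apply LipschitzWith.of_dist_le_mul
    intro v w
    have hdiff : f v - f w = (v 0 - w 0) • e1 + (v 1 - w 1) • e2 := by
      simp only [hf, sub_smul]
      abel
    rw [dist_eq_norm, hdiff]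
    have h0 : |v 0 - w 0| ≤ dist v w := by
      rw [← Real.dist_eq]; exact dist_le_pi_dist v w 0
    have h1 : |v 1 - w 1| ≤ dist v w := by
      rw [← Real.dist_eq]; exact dist_le_pi_dist v w 1
    have hd : (0:ℝ) ≤ dist v w := dist_nonneg
    calc ‖(v 0 - w 0) • e1 + (v 1 - w 1) • e2‖
        ≤ ‖(v 0 - w 0) • e1‖ + ‖(v 1 - w 1) • e2‖ := norm_add_le _ _
      _ = |v 0 - w 0| * ‖e1‖ + |v 1 - w 1| * ‖e2‖ := by
          rw [norm_smul, norm_smul, Real.norm_eq_abs, Real.norm_eq_abs]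
      _ ≤ dist v w * 2 + dist v w * 2 := by
          nlinarith [h0, h1, hn1, hn2, hd, abs_nonneg (v 0 - w 0), abs_nonneg (v 1 - w 1),
            norm_nonneg e1, norm_nonneg e2]
      _ ≤ (4:ℝ≥0) * dist v w := by push_cast; linarith
  have hsub : {ξ : EuclideanSpace ℝ (Fin 3) | ξ 0 + ξ 1 + ξ 2 = 0} ∩ Metric.closedBall x r
      ⊆ f '' Metric.closedBall 0 r := by
    rintro p ⟨hp, hpb⟩
    have hp' : p 0 + p 1 + p 2 = 0 := hp
    have hdist : ‖p - x‖ ≤ r := by rwa [← dist_eq_norm, ← mem_closedBall]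
    have hc0 : |p 0 - x 0| ≤ r := by
      have := euclid_coord_le (p - x) 0
      simpa using this.trans hdist
    have hc2 : |p 2 - x 2| ≤ r := by
      have := euclid_coord_le (p - x) 2
      simpa using this.trans hdist
    refine ⟨![p 0 - x 0, -(p 2 - x 2)], ?_, ?_⟩
    · rw [mem_closedBall, dist_zero_right]
      refine (pi_norm_le_iff_of_nonneg hr).2 ?_
      intro i
      fin_cases i
      · simpa [Real.norm_eq_abs] using hc0
      · simpa [Real.norm_eq_abs, abs_sub_comm] using hc2
    · ext i
      have hcoord : ∀ j : Fin 3, f ![p 0 - x 0, -(p 2 - x 2)] j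
          = x j + (p 0 - x 0) * e1 j + (-(p 2 - x 2)) * e2 j := fun j => rfl
      rw [hcoord i]
      fin_cases i <;> simp [he1c, he2c] <;> linarith [hp', hx]
  calc μH[2] ({ξ : EuclideanSpace ℝ (Fin 3) | ξ 0 + ξ 1 + ξ 2 = 0} ∩ Metric.closedBall x r)
      ≤ μH[2] (f '' Metric.closedBall 0 r) := measure_mono hsub
    _ ≤ (4:ℝ≥0) ^ (2:ℝ) * μH[2] (Metric.closedBall (0 : Fin 2 → ℝ) r) :=
        hlip.hausdorffMeasure_image_le (by norm_num) _
    _ ≤ ENNReal.ofReal (64 * r ^ 2) := by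
        have hμ : (μH[2] : Measure (Fin 2 → ℝ)) = volume := by
          rw [show ((2:ℝ)) = ((Fintype.card (Fin 2) : ℕ) : ℝ) by simp]
          exact hausdorffMeasure_pi_real
        rw [hμ, closedBall_pi _ hr, volume_pi_pi]
        simp only [Real.volume_closedBall]
        rw [Finset.prod_const]
        have h2r : (0:ℝ) ≤ 2 * r := by linarith
        rw [Finset.card_univ, Fintype.card_fin, ← ENNReal.ofReal_pow h2r]
        have h4 : ((4:ℝ≥0) : ℝ≥0∞) ^ (2:ℝ) = ENNReal.ofReal 16 := by
          rw [show ((2:ℝ)) = ((2:ℕ) : ℝ) by norm_num, ENNReal.rpow_natCast]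
          rw [show ((4:ℝ≥0) : ℝ≥0∞) = ENNReal.ofReal 4 by
            rw [ENNReal.ofReal]; norm_num]
          rw [← ENNReal.ofReal_pow (by norm_num)]
          norm_num
        rw [h4, ← ENNReal.ofReal_mul (by norm_num)]
        apply ENNReal.ofReal_le_ofReal
        nlinarith [sq_nonneg r]

end Aux

set_option maxHeartbeats 2000000 in
/-- Derivative bounds for `X_Γ`: `|∂^α X_Γ(x)| ≤ C·d_Γ(x)^{-|α|}` where `C` depends
only on the order `k = |α|`, on `ε`, and on `χ` (hence its `C^k` norm). -/
theorem XGamma_derivative_bound (ε : ℝ) (hε0 : 0 < ε) (hε1 : ε < 1) (k : ℕ)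
    (χ : EuclideanSpace ℝ (Fin 3) → ℝ)
    (hχ : ContDiff ℝ (⊤ : ℕ∞) χ)
    (hχsupp : ∀ y, χ y ≠ 0 → ‖y‖ < 2 * ε / 10) :
    ∃ C : ℝ, 0 < C ∧
      ∀ (Γ : Set (EuclideanSpace ℝ (Fin 3))),
        Γ ⊆ {ξ : EuclideanSpace ℝ (Fin 3) | ξ 0 + ξ 1 + ξ 2 = 0} →
        IsClosed Γ → Γ.Nonempty →
        ∀ x ∈ {ξ : EuclideanSpace ℝ (Fin 3) | ξ 0 + ξ 1 + ξ 2 = 0} \ Γ,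
          ‖iteratedFDeriv ℝ k
              (fun z : EuclideanSpace ℝ (Fin 3) =>
                ∫ β in {ξ : EuclideanSpace ℝ (Fin 3) | ξ 0 + ξ 1 + ξ 2 = 0},
                  χ ((infDist β Γ)⁻¹ • (β - z)) / (infDist β Γ) ^ 2 ∂(μH[2])) x‖
            ≤ C / (infDist x Γ) ^ k := by
  classical
  set δ : ℝ := 2 * ε / 10 with hδdef
  have hδpos : 0 < δ := by simp only [hδdef]; linarith
  have hδ15 : δ ≤ 1 / 5 := by simp only [hδdef]; linarith
  have hts : tsupport χ ⊆ Metric.closedBall 0 δ := by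
    apply closure_minimal _ Metric.isClosed_closedBall
    intro y hy
    exact mem_closedBall_zero_iff.2 (hχsupp y hy).le
  have hcs : HasCompactSupport χ :=
    IsCompact.of_isClosed_subset (isCompact_closedBall _ _) (isClosed_tsupport χ) hts
  have hM : ∀ n : ℕ, ∃ C : ℝ, 0 ≤ C ∧ ∀ y, ‖iteratedFDeriv ℝ n χ y‖ ≤ C := by
    intro n
    have hc : Continuous (iteratedFDeriv ℝ n χ) := hχ.continuous_iteratedFDeriv (by exact_mod_cast le_top)
    have hcsn : HasCompactSupport (iteratedFDeriv ℝ n χ) :=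
      IsCompact.of_isClosed_subset hcs (isClosed_tsupport _) (tsupport_iteratedFDeriv_subset n)
    obtain ⟨C, hC⟩ := hc.bounded_above_of_compact_support hcsn
    exact ⟨max C 0, le_max_right _ _, fun y => (hC y).trans (le_max_left _ _)⟩
  choose M hM0 hMb using hM
  have hDsupp : ∀ (n : ℕ) (y : (EuclideanSpace ℝ (Fin 3))), iteratedFDeriv ℝ n χ y ≠ 0 → ‖y‖ ≤ δ := by
    intro n y hy
    have h1 : y ∈ tsupport χ := support_iteratedFDeriv_subset n hy
    exact mem_closedBall_zero_iff.1 (hts h1)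
  refine ⟨24 * (8 / 5) ^ (k + 2) * M k + 1, by have := hM0 k; positivity, ?_⟩
  intro Γ hΓP hΓcl hΓne x hx
  obtain ⟨hxP, hxΓ⟩ := hx
  set dx : ℝ := infDist x Γ with hdxdef
  have hdxpos : 0 < dx := (hΓcl.notMem_iff_infDist_pos hΓne).1 hxΓ
  have hdxne : dx ≠ 0 := hdxpos.ne'
  set P : Set (EuclideanSpace ℝ (Fin 3)) := {ξ : (EuclideanSpace ℝ (Fin 3)) | ξ 0 + ξ 1 + ξ 2 = 0} with hPdef
  -- derivative formula for the integrand family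
  have hgiter : ∀ (n : ℕ) (β z : (EuclideanSpace ℝ (Fin 3))),
      iteratedFDeriv ℝ n (fun w => χ ((infDist β Γ)⁻¹ • (β - w)) / (infDist β Γ) ^ 2) z
        = (((infDist β Γ) ^ 2)⁻¹ * (-(infDist β Γ)⁻¹) ^ n) •
            iteratedFDeriv ℝ n χ ((infDist β Γ)⁻¹ • (β - z)) := by
    intro n β z
    have hrw : (fun w => χ ((infDist β Γ)⁻¹ • (β - w)) / (infDist β Γ) ^ 2)
        = fun w => ((infDist β Γ) ^ 2)⁻¹ • χ ((infDist β Γ)⁻¹ • (β - w)) := by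
      funext w; rw [div_eq_inv_mul]; rfl
    rw [hrw, iter_smul_comp χ hχ _ _ β n z]
  have hgsm : ∀ β : (EuclideanSpace ℝ (Fin 3)),
      ContDiff ℝ (⊤ : ℕ∞) (fun w => χ ((infDist β Γ)⁻¹ • (β - w)) / (infDist β Γ) ^ 2) := by
    intro β
    have h1 : ContDiff ℝ (⊤ : ℕ∞) (fun w : (EuclideanSpace ℝ (Fin 3)) => χ ((infDist β Γ)⁻¹ • (β - w))) :=
      hχ.comp ((contDiff_const.sub contDiff_id).const_smul _)
    exact h1.div_const _
  set bnd : ℕ → (EuclideanSpace ℝ (Fin 3)) → ℝ := fun n => (Metric.closedBall x (3 * dx / 5)).indicator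
      (fun _ => (8 / (5 * dx)) ^ (n + 2) * M n) with hbnddef
  -- pointwise bound
  have hb : ∀ (n : ℕ), ∀ z ∈ Metric.ball x (dx / 4), ∀ β : (EuclideanSpace ℝ (Fin 3)),
      ‖iteratedFDeriv ℝ n (fun w => χ ((infDist β Γ)⁻¹ • (β - w)) / (infDist β Γ) ^ 2) z‖
        ≤ bnd n β := by
    intro n z hz β
    by_cases h0 : iteratedFDeriv ℝ n
        (fun w => χ ((infDist β Γ)⁻¹ • (β - w)) / (infDist β Γ) ^ 2) z = 0
    · rw [h0, norm_zero]
      apply Set.indicator_nonneg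
      intro _ _
      have := hM0 n
      positivity
    · rw [hgiter n β z] at h0 ⊢
      have hsm := smul_ne_zero_iff.1 h0
      have hdβ0 : infDist β Γ ≠ 0 := by
        intro h; apply hsm.1; rw [h]; simp
      have hdβpos : 0 < infDist β Γ := lt_of_le_of_ne infDist_nonneg (Ne.symm hdβ0)
      have hnorm1 : ‖(infDist β Γ)⁻¹ • (β - z)‖ ≤ δ := hDsupp n _ hsm.2
      have hβz : ‖β - z‖ ≤ δ * infDist β Γ := by
        rw [norm_smul, Real.norm_eq_abs, abs_of_pos (inv_pos.2 hdβpos)] at hnorm1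
        calc ‖β - z‖ = infDist β Γ * ((infDist β Γ)⁻¹ * ‖β - z‖) := by field_simp
          _ ≤ infDist β Γ * δ := mul_le_mul_of_nonneg_left hnorm1 hdβpos.le
          _ = δ * infDist β Γ := mul_comm _ _
      have hzx : dist z x ≤ dx / 4 := (mem_ball.1 hz).le
      have hl1 : |infDist z Γ - dx| ≤ dist z x := by
        have h := (lipschitz_infDist_pt Γ).dist_le_mul z x
        rwa [Real.dist_eq, NNReal.coe_one, one_mul] at h
      have hl2 : |infDist β Γ - infDist z Γ| ≤ ‖β - z‖ := by
        have h := (lipschitz_infDist_pt Γ).dist_le_mul β z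
        rwa [Real.dist_eq, NNReal.coe_one, one_mul, dist_eq_norm] at h
      obtain ⟨ha1, ha2⟩ := abs_le.1 hl1
      obtain ⟨hb1, hb2⟩ := abs_le.1 hl2
      have hδβ : δ * infDist β Γ ≤ infDist β Γ / 5 := by nlinarith [hdβpos.le]
      have hdβlb : 5 / 8 * dx ≤ infDist β Γ := by linarith
      have hdβub : infDist β Γ ≤ 25 / 16 * dx := by linarith
      have hβmem : β ∈ Metric.closedBall x (3 * dx / 5) := by
        rw [mem_closedBall]
        have h3 : dist β z ≤ δ * infDist β Γ := by rwa [dist_eq_norm]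
        have h4 := dist_triangle β z x
        linarith
      have hind : bnd n β = (8 / (5 * dx)) ^ (n + 2) * M n := by
        simp only [hbnddef, Set.indicator_of_mem hβmem]
      rw [hind, norm_smul, Real.norm_eq_abs]
      have habs : |((infDist β Γ) ^ 2)⁻¹ * (-(infDist β Γ)⁻¹) ^ n|
          = ((infDist β Γ)⁻¹) ^ (n + 2) := by
        have h1 : ((infDist β Γ) ^ 2)⁻¹ * (-(infDist β Γ)⁻¹) ^ n
            = (-1) ^ n * ((infDist β Γ)⁻¹) ^ (n + 2) := by
          rw [neg_pow, ← inv_pow, pow_add]; ring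
        rw [h1, abs_mul, abs_pow, abs_neg, abs_one, one_pow, one_mul,
          abs_of_nonneg (pow_nonneg (inv_nonneg.2 infDist_nonneg) _)]
      rw [habs]
      have hinv : (infDist β Γ)⁻¹ ≤ 8 / (5 * dx) := by
        have h58 : (0:ℝ) < 5 / 8 * dx := by positivity
        have h5 := inv_anti₀ h58 hdβlb
        have h6 : (5 / 8 * dx)⁻¹ = 8 / (5 * dx) := by
          field_simp
        rwa [h6] at h5
      exact mul_le_mul (pow_le_pow_left₀ (inv_nonneg.2 infDist_nonneg) hinv _)
        (hMb n _) (norm_nonneg _) (by positivity)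
  -- measurability
  have hmeasf : ∀ (n : ℕ) (z : (EuclideanSpace ℝ (Fin 3))), AEStronglyMeasurable
      (fun β => iteratedFDeriv ℝ n
        (fun w => χ ((infDist β Γ)⁻¹ • (β - w)) / (infDist β Γ) ^ 2) z)
      (μH[2].restrict P) := by
    intro n z
    have hrw : (fun β => iteratedFDeriv ℝ n
        (fun w => χ ((infDist β Γ)⁻¹ • (β - w)) / (infDist β Γ) ^ 2) z)
        = fun β => ((((infDist β Γ) ^ 2)⁻¹ * (-(infDist β Γ)⁻¹) ^ n) •
            iteratedFDeriv ℝ n χ ((infDist β Γ)⁻¹ • (β - z))) :=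
      funext fun β => hgiter n β z
    rw [hrw]
    have hdm : Measurable (fun β : (EuclideanSpace ℝ (Fin 3)) => infDist β Γ) := (continuous_infDist_pt Γ).measurable
    have hu : Continuous (fun p : ℝ × (ℝ × (EuclideanSpace ℝ (Fin 3))) =>
        p.1 • iteratedFDeriv ℝ n χ (p.2.1 • p.2.2)) :=
      continuous_fst.smul ((hχ.continuous_iteratedFDeriv (by exact_mod_cast le_top)).comp
        ((continuous_fst.comp continuous_snd).smul (continuous_snd.comp continuous_snd)))
    have hv : Measurable (fun β : (EuclideanSpace ℝ (Fin 3)) =>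
        (((((infDist β Γ) ^ 2)⁻¹ * (-(infDist β Γ)⁻¹) ^ n) : ℝ),
          (((infDist β Γ)⁻¹ : ℝ), β - z))) := by
      apply Measurable.prodMk
      · exact ((hdm.pow_const 2).inv).mul ((hdm.inv.neg).pow_const n)
      · exact hdm.inv.prodMk ((continuous_id.sub continuous_const).measurable)
    exact hu.comp_aestronglyMeasurable hv.aestronglyMeasurable
  -- measure of the relevant ball
  have hμball : (μH[2].restrict P) (Metric.closedBall x (3 * dx / 5))
      ≤ ENNReal.ofReal (64 * (3 * dx / 5) ^ 2) := by
    rw [Measure.restrict_apply measurableSet_closedBall, Set.inter_comm]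
    exact plane_ball_measure x hxP (by positivity)
  have hμball_lt : (μH[2].restrict P) (Metric.closedBall x (3 * dx / 5)) < ⊤ :=
    lt_of_le_of_lt hμball ENNReal.ofReal_lt_top
  have hbint : ∀ n : ℕ, Integrable (bnd n) (μH[2].restrict P) := by
    intro n
    simp only [hbnddef]
    rw [integrable_indicator_iff measurableSet_closedBall]
    exact integrableOn_const hμball_lt.ne
  have hint : ∀ (n : ℕ), ∀ z ∈ Metric.ball x (dx / 4), Integrable
      (fun β => iteratedFDeriv ℝ n
        (fun w => χ ((infDist β Γ)⁻¹ • (β - w)) / (infDist β Γ) ^ 2) z)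
      (μH[2].restrict P) := fun n z hz =>
    (hbint n).mono' (hmeasf n z) (ae_of_all _ (hb n z hz))
  -- the key differentiation-under-the-integral identity
  have key : ∀ n : ℕ, ∀ z ∈ Metric.ball x (dx / 4),
      iteratedFDeriv ℝ n (fun w : (EuclideanSpace ℝ (Fin 3)) =>
          ∫ β in P, χ ((infDist β Γ)⁻¹ • (β - w)) / (infDist β Γ) ^ 2 ∂μH[2]) z
        = ∫ β in P, iteratedFDeriv ℝ n
            (fun w => χ ((infDist β Γ)⁻¹ • (β - w)) / (infDist β Γ) ^ 2) z ∂μH[2] := by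
    intro n
    induction n with
    | zero =>
      intro z hz
      ext m
      rw [ContinuousMultilinearMap.integral_apply (hint 0 z hz)]
      simp only [iteratedFDeriv_zero_apply]
    | succ n ih =>
      intro z₀ hz₀
      set e := continuousMultilinearCurryLeftEquiv ℝ (fun _ : Fin (n + 1) => (EuclideanSpace ℝ (Fin 3))) ℝ with he
      set r := dx / 4 - dist z₀ x with hrdef
      have hrpos : 0 < r := by
        have := mem_ball.1 hz₀
        simp only [hrdef]; linarith
      have hballsub : Metric.ball z₀ r ⊆ Metric.ball x (dx / 4) := by
        intro w hw
        rw [mem_ball] at hw ⊢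
        have := dist_triangle w z₀ x
        simp only [hrdef] at hw
        linarith
      have hF'eq : ∀ (β : (EuclideanSpace ℝ (Fin 3))) (z : (EuclideanSpace ℝ (Fin 3))),
          fderiv ℝ (iteratedFDeriv ℝ n
            (fun w => χ ((infDist β Γ)⁻¹ • (β - w)) / (infDist β Γ) ^ 2)) z
          = e (iteratedFDeriv ℝ (n + 1)
            (fun w => χ ((infDist β Γ)⁻¹ • (β - w)) / (infDist β Γ) ^ 2) z) := by
        intro β z
        have h1 := congrFun (iteratedFDeriv_succ_eq_comp_left (𝕜 := ℝ)
          (f := fun w => χ ((infDist β Γ)⁻¹ • (β - w)) / (infDist β Γ) ^ 2) (n := n)) z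
        rw [h1]
        simp only [Function.comp_apply]
        exact (e.apply_symm_apply _).symm
      have hF'meas : AEStronglyMeasurable (fun β : (EuclideanSpace ℝ (Fin 3)) => fderiv ℝ (iteratedFDeriv ℝ n
          (fun w => χ ((infDist β Γ)⁻¹ • (β - w)) / (infDist β Γ) ^ 2)) z₀)
          (μH[2].restrict P) := by
        have hrw : (fun β : (EuclideanSpace ℝ (Fin 3)) => fderiv ℝ (iteratedFDeriv ℝ n
            (fun w => χ ((infDist β Γ)⁻¹ • (β - w)) / (infDist β Γ) ^ 2)) z₀)
            = fun β => e (iteratedFDeriv ℝ (n + 1)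
              (fun w => χ ((infDist β Γ)⁻¹ • (β - w)) / (infDist β Γ) ^ 2) z₀) :=
          funext fun β => hF'eq β z₀
        rw [hrw]
        exact e.continuous.comp_aestronglyMeasurable (hmeasf (n + 1) z₀)
      have hdiff := hasFDerivAt_integral_of_dominated_of_fderiv_le (𝕜 := ℝ)
        (F := fun z β => iteratedFDeriv ℝ n
          (fun w => χ ((infDist β Γ)⁻¹ • (β - w)) / (infDist β Γ) ^ 2) z)
        (F' := fun z β => fderiv ℝ (iteratedFDeriv ℝ n
          (fun w => χ ((infDist β Γ)⁻¹ • (β - w)) / (infDist β Γ) ^ 2)) z)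
        (bound := bnd (n + 1)) (Metric.ball_mem_nhds z₀ hrpos)
        (Filter.Eventually.of_forall fun z => hmeasf n z)
        (hint n z₀ hz₀)
        hF'meas
        (ae_of_all _ fun β z hz => by
          rw [hF'eq β z, e.norm_map]
          exact hb (n + 1) z (hballsub hz) β)
        (hbint (n + 1))
        (ae_of_all _ fun β z hz => by
          have h1 : ContDiff ℝ 1 (iteratedFDeriv ℝ n
              (fun w => χ ((infDist β Γ)⁻¹ • (β - w)) / (infDist β Γ) ^ 2)) :=
            (hgsm β).iteratedFDeriv_right (by exact_mod_cast le_top)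
          exact ((h1.differentiable one_ne_zero) z).hasFDerivAt)
      have hev : (iteratedFDeriv ℝ n (fun w : (EuclideanSpace ℝ (Fin 3)) =>
          ∫ β in P, χ ((infDist β Γ)⁻¹ • (β - w)) / (infDist β Γ) ^ 2 ∂μH[2]))
          =ᶠ[nhds z₀] (fun z => ∫ β in P, iteratedFDeriv ℝ n
            (fun w => χ ((infDist β Γ)⁻¹ • (β - w)) / (infDist β Γ) ^ 2) z ∂μH[2]) :=
        Filter.eventually_of_mem (isOpen_ball.mem_nhds hz₀) fun w hw => ih w hw
      have hF : HasFDerivAt (iteratedFDeriv ℝ n (fun w : (EuclideanSpace ℝ (Fin 3)) =>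
          ∫ β in P, χ ((infDist β Γ)⁻¹ • (β - w)) / (infDist β Γ) ^ 2 ∂μH[2]))
          (∫ β in P, fderiv ℝ (iteratedFDeriv ℝ n
            (fun w => χ ((infDist β Γ)⁻¹ • (β - w)) / (infDist β Γ) ^ 2)) z₀ ∂μH[2]) z₀ :=
        hdiff.congr_of_eventuallyEq hev
      have h2 := congrFun (iteratedFDeriv_succ_eq_comp_left (𝕜 := ℝ)
        (f := fun w : (EuclideanSpace ℝ (Fin 3)) =>
          ∫ β in P, χ ((infDist β Γ)⁻¹ • (β - w)) / (infDist β Γ) ^ 2 ∂μH[2]) (n := n)) z₀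
      rw [h2]
      simp only [Function.comp_apply]
      rw [hF.fderiv]
      have hcomm : ∫ β in P, e.symm (fderiv ℝ (iteratedFDeriv ℝ n
            (fun w => χ ((infDist β Γ)⁻¹ • (β - w)) / (infDist β Γ) ^ 2)) z₀) ∂μH[2]
          = e.symm (∫ β in P, fderiv ℝ (iteratedFDeriv ℝ n
            (fun w => χ ((infDist β Γ)⁻¹ • (β - w)) / (infDist β Γ) ^ 2)) z₀ ∂μH[2]) := by
        have h3 := LinearIsometry.integral_comp_comm (𝕜 := ℝ) (F := ContinuousMultilinearMap ℝ (fun _ : Fin (n + 1) => EuclideanSpace ℝ (Fin 3)) ℝ) e.symm.toLinearIsometry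
          (μ := μH[2].restrict P)
          (fun β : (EuclideanSpace ℝ (Fin 3)) => fderiv ℝ (iteratedFDeriv ℝ n
            (fun w => χ ((infDist β Γ)⁻¹ • (β - w)) / (infDist β Γ) ^ 2)) z₀)
        simpa [LinearIsometryEquiv.coe_toLinearIsometry] using h3
      rw [← hcomm]
      refine integral_congr_ae (ae_of_all _ fun β => ?_)
      dsimp only
      rw [hF'eq β z₀, e.symm_apply_apply]
  -- conclusion
  have hxball : x ∈ Metric.ball x (dx / 4) := mem_ball_self (by positivity)
  rw [key k x hxball]
  have hnorm : ‖∫ β in P, iteratedFDeriv ℝ k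
      (fun w => χ ((infDist β Γ)⁻¹ • (β - w)) / (infDist β Γ) ^ 2) x ∂μH[2]‖
      ≤ ∫ β in P, bnd k β ∂μH[2] :=
    norm_integral_le_of_norm_le (hbint k) (ae_of_all _ fun β => hb k x hxball β)
  have hintval : ∫ β in P, bnd k β ∂μH[2]
      = ((μH[2].restrict P) (Metric.closedBall x (3 * dx / 5))).toReal
          * ((8 / (5 * dx)) ^ (k + 2) * M k) := by
    simp only [hbnddef]
    rw [integral_indicator_const _ measurableSet_closedBall, smul_eq_mul]; rfl
  have htoReal : ((μH[2].restrict P) (Metric.closedBall x (3 * dx / 5))).toReal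
      ≤ 64 * (3 * dx / 5) ^ 2 :=
    ENNReal.toReal_le_of_le_ofReal (by positivity) hμball
  have hfinal : ((μH[2].restrict P) (Metric.closedBall x (3 * dx / 5))).toReal
        * ((8 / (5 * dx)) ^ (k + 2) * M k)
      ≤ (24 * (8 / 5) ^ (k + 2) * M k + 1) / dx ^ k := by
    rw [le_div_iff₀ (by positivity)]
    have hstep : ((μH[2].restrict P) (Metric.closedBall x (3 * dx / 5))).toReal
        * ((8 / (5 * dx)) ^ (k + 2) * M k) * dx ^ k
        ≤ (64 * (3 * dx / 5) ^ 2) * ((8 / (5 * dx)) ^ (k + 2) * M k) * dx ^ k := by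
      have hMk := hM0 k
      have hnn : (0:ℝ) ≤ (8 / (5 * dx)) ^ (k + 2) * M k * dx ^ k := by positivity
      nlinarith [mul_le_mul_of_nonneg_right htoReal hnn]
    refine hstep.trans ?_
    have hid : (64 * (3 * dx / 5) ^ 2) * ((8 / (5 * dx)) ^ (k + 2) * M k) * dx ^ k
        = (2304 / 100) * ((8 / 5) ^ (k + 2) * M k) := by
      have h1 : (8 : ℝ) / (5 * dx) = (8 / 5) * dx⁻¹ := by field_simp
      rw [h1, mul_pow]
      have h2 : (dx⁻¹) ^ (k + 2) = (dx ^ (k + 2))⁻¹ := inv_pow dx (k + 2)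
      rw [h2]
      have h3 : dx ^ (k + 2) = dx ^ k * dx ^ 2 := by rw [pow_add]
      rw [h3]
      field_simp
      ring
    rw [hid]
    have hMk := hM0 k
    nlinarith [pow_nonneg (show (0:ℝ) ≤ 8/5 by norm_num) (k + 2)]
  rw [hintval] at hnorm
  exact hnorm.trans hfinal
end

section
/- Let W_{γ,t} := {β ∈ V : t ≤ |β - γ| ≤ (1/δ₁)d_Γ(β)} and U_γ^j := {β ∈ V : |⟨β - γ, e_j⟩| ≤ δ₂|β - γ|}. Under the standing assumptions on Γ, θ₀, θ₁ (with δ₁ = sin θ₁, δ₂ = (√6/3)cos(π/3 + θ₀ + θ₁), and sin θ₁ < δ₂), for every γ ∈ Γ and every j ∈ {1,2,3}, U_γ^j ⊆ W_{γ,0}. -/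
open Metric
open scoped RealInnerProductSpace

private lemma scalar_est {p q P Q : ℝ} (hp0 : 0 ≤ p) (hpP : p ≤ P) (hPQ : P ≤ Q)
    (hQq : Q ≤ q) (hq1 : q ≤ 1) :
    p * q + Real.sqrt (1 - p ^ 2) * Real.sqrt (1 - q ^ 2)
      ≤ P * Q + Real.sqrt (1 - P ^ 2) * Real.sqrt (1 - Q ^ 2) := by
  have hp1 : p ≤ 1 := by linarith
  have hP1 : P ≤ 1 := by linarith
  have hQ1 : Q ≤ 1 := by linarith
  have hP0 : 0 ≤ P := by linarith
  have hQ0 : 0 ≤ Q := by linarith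
  have hq0 : 0 ≤ q := by linarith
  have e1 : p * q + Real.sqrt (1 - p ^ 2) * Real.sqrt (1 - q ^ 2)
      = Real.cos (Real.arccos p - Real.arccos q) := by
    rw [Real.cos_sub, Real.cos_arccos (by linarith) hp1, Real.cos_arccos (by linarith) hq1,
      Real.sin_arccos, Real.sin_arccos]
  have e2 : P * Q + Real.sqrt (1 - P ^ 2) * Real.sqrt (1 - Q ^ 2)
      = Real.cos (Real.arccos P - Real.arccos Q) := by
    rw [Real.cos_sub, Real.cos_arccos (by linarith) hP1, Real.cos_arccos (by linarith) hQ1,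
      Real.sin_arccos, Real.sin_arccos]
  rw [e1, e2]
  have hanti : ∀ x y : ℝ, -1 ≤ x → x ≤ y → y ≤ 1 → Real.arccos y ≤ Real.arccos x := by
    intro x y hx hxy hy
    rcases eq_or_lt_of_le hxy with rfl | h
    · exact le_rfl
    · exact le_of_lt (Real.strictAntiOn_arccos ⟨hx, by linarith⟩ ⟨by linarith, hy⟩ h)
  have h1 : Real.arccos P ≤ Real.arccos p := hanti p P (by linarith) hpP hP1
  have h2 : Real.arccos q ≤ Real.arccos Q := hanti Q q (by linarith) hQq hq1
  have h3 : Real.arccos Q ≤ Real.arccos P := hanti P Q (by linarith) hPQ hQ1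
  have h4 : Real.arccos p ≤ Real.pi / 2 := Real.arccos_le_pi_div_two.mpr hp0
  have h5 : 0 ≤ Real.arccos q := Real.arccos_nonneg q
  exact Real.cos_le_cos_of_nonneg_of_le_pi (by linarith)
    (by linarith [Real.pi_pos]) (by linarith)

private lemma inner_est {E : Type*} [NormedAddCommGroup E] [InnerProductSpace ℝ E]
    {a b w : E} (ha : ‖a‖ = 1) (hb : ‖b‖ = 1) (hw : ‖w‖ = 1)
    {P Q : ℝ} (hP0 : 0 ≤ P) (hPQ : P ≤ Q)
    (hpa : |⟪a, w⟫| ≤ P) (hqb : Q ≤ ⟪b, w⟫) :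
    |⟪a, b⟫| ≤ P * Q + Real.sqrt (1 - P ^ 2) * Real.sqrt (1 - Q ^ 2) := by
  set p := ⟪a, w⟫ with hp
  set q := ⟪b, w⟫ with hq
  have hq1 : q ≤ 1 := by
    have := real_inner_le_norm b w
    rw [hb, hw] at this; simpa using this
  have hq0 : 0 ≤ q := le_trans (le_trans (le_trans (abs_nonneg p) hpa) hPQ) hqb
  have hww : ⟪w, w⟫ = 1 := by
    rw [real_inner_self_eq_norm_sq, hw]; norm_num
  have hwa : ⟪w, a⟫ = p := by rw [real_inner_comm]
  have hwb : ⟪w, b⟫ = q := by rw [real_inner_comm]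
  have key : ⟪a, b⟫ = p * q + ⟪a - p • w, b - q • w⟫ := by
    simp only [inner_sub_left, inner_sub_right, real_inner_smul_left, real_inner_smul_right,
      hww, hwa, hwb]
    ring
  have hna : ‖a - p • w‖ = Real.sqrt (1 - p ^ 2) := by
    have h2 : ‖a - p • w‖ ^ 2 = 1 - p ^ 2 := by
      rw [norm_sub_sq_real, real_inner_smul_right, norm_smul, ha, hw, Real.norm_eq_abs, ← hp]
      rw [mul_one, one_pow, sq_abs]
      ring
    rw [← h2, Real.sqrt_sq (norm_nonneg _)]
  have hnb : ‖b - q • w‖ = Real.sqrt (1 - q ^ 2) := by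
    have h2 : ‖b - q • w‖ ^ 2 = 1 - q ^ 2 := by
      rw [norm_sub_sq_real, real_inner_smul_right, norm_smul, hb, hw, Real.norm_eq_abs, ← hq]
      rw [mul_one, one_pow, sq_abs]
      ring
    rw [← h2, Real.sqrt_sq (norm_nonneg _)]
  calc |⟪a, b⟫| = |p * q + ⟪a - p • w, b - q • w⟫| := by rw [key]
    _ ≤ |p * q| + |⟪a - p • w, b - q • w⟫| := abs_add_le _ _
    _ ≤ |p| * q + ‖a - p • w‖ * ‖b - q • w‖ := by
        gcongr
        · rw [abs_mul, abs_of_nonneg hq0]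
        · exact abs_real_inner_le_norm _ _
    _ = |p| * q + Real.sqrt (1 - |p| ^ 2) * Real.sqrt (1 - q ^ 2) := by
        rw [hna, hnb, sq_abs]
    _ ≤ P * Q + Real.sqrt (1 - P ^ 2) * Real.sqrt (1 - Q ^ 2) :=
        scalar_est (abs_nonneg p) hpa hPQ hqb hq1

/-- normalized projection of `e j` onto the sum-zero plane -/
noncomputable def wv (j : Fin 3) : EuclideanSpace ℝ (Fin 3) :=
  WithLp.toLp 2 (fun i => if i = j then Real.sqrt 6 / 3 else -(Real.sqrt 6 / 6))

private lemma wv_norm (j : Fin 3) : ‖wv j‖ = 1 := by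
  have h6 : Real.sqrt 6 * Real.sqrt 6 = 6 := Real.mul_self_sqrt (by norm_num)
  have h2 : ‖wv j‖ ^ 2 = 1 := by
    rw [← real_inner_self_eq_norm_sq, PiLp.inner_apply]
    fin_cases j <;>
      · simp [wv, Fin.sum_univ_three]
        nlinarith [h6]
  rw [← Real.sqrt_sq (norm_nonneg (wv j)), h2, Real.sqrt_one]

private lemma wv_inner {j k : Fin 3} (h : j ≠ k) : ⟪wv j, wv k⟫ = -(1 / 2) := by
  have h6 : Real.sqrt 6 * Real.sqrt 6 = 6 := Real.mul_self_sqrt (by norm_num)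
  rw [PiLp.inner_apply]
  fin_cases j <;> fin_cases k <;> simp [wv, Fin.sum_univ_three] at h ⊢ <;> nlinarith [h6]

private lemma inner_wv (ξ : EuclideanSpace ℝ (Fin 3)) (hξ : ξ 0 + ξ 1 + ξ 2 = 0) (j : Fin 3) :
    ⟪ξ, wv j⟫ = Real.sqrt 6 / 2 * ξ j := by
  rw [PiLp.inner_apply]
  fin_cases j <;>
    · simp [wv, Fin.sum_univ_three]
      linear_combination (-(Real.sqrt 6 / 6)) * hξ

/-- Claim A: the cone condition at `j₀` gives a lower bound on every component. -/
private lemma compA {θ₀ : ℝ} (hθ0 : 0 ≤ θ₀) (hθ6 : θ₀ < Real.pi / 6)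
    (u : EuclideanSpace ℝ (Fin 3)) (huV : u 0 + u 1 + u 2 = 0) (hu : u ≠ 0)
    {j₀ : Fin 3} (hc : Real.sqrt 6 / 3 * ‖u‖ * Real.cos θ₀ < |u j₀|) (j : Fin 3) :
    Real.sqrt 6 / 3 * Real.cos (Real.pi / 3 + θ₀) * ‖u‖ ≤ |u j| := by
  have hπ := Real.pi_pos
  have h6 : Real.sqrt 6 * Real.sqrt 6 = 6 := Real.mul_self_sqrt (by norm_num)
  have h6p : 0 < Real.sqrt 6 := Real.sqrt_pos.mpr (by norm_num)
  have hun : 0 < ‖u‖ := norm_pos_iff.mpr hu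
  have hα2 : Real.pi / 3 + θ₀ < Real.pi / 2 := by linarith
  have hα0 : 0 ≤ Real.pi / 3 + θ₀ := by linarith
  have hcosα : 0 < Real.cos (Real.pi / 3 + θ₀) :=
    Real.cos_pos_of_mem_Ioo ⟨by linarith, hα2⟩
  have hmono2 : Real.cos (Real.pi / 3 + θ₀) ≤ Real.cos θ₀ :=
    Real.cos_le_cos_of_nonneg_of_le_pi hθ0 (by linarith) (by linarith)
  by_cases hj : j = j₀
  · subst hj
    have hmono : Real.cos (Real.pi / 3 + θ₀) ≤ Real.cos θ₀ :=
      Real.cos_le_cos_of_nonneg_of_le_pi hθ0 (by linarith) (by linarith)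
    have h1 : Real.sqrt 6 / 3 * Real.cos (Real.pi / 3 + θ₀) * ‖u‖
        ≤ Real.sqrt 6 / 3 * ‖u‖ * Real.cos θ₀ := by
      rw [show Real.sqrt 6 / 3 * Real.cos (Real.pi / 3 + θ₀) * ‖u‖
          = Real.sqrt 6 / 3 * ‖u‖ * Real.cos (Real.pi / 3 + θ₀) by ring]
      exact mul_le_mul_of_nonneg_left hmono (by positivity)
    linarith
  · by_contra hcon
    push_neg at hcon
    set a : EuclideanSpace ℝ (Fin 3) := (‖u‖ : ℝ)⁻¹ • u with hadef
    have ha : ‖a‖ = 1 := norm_smul_inv_norm hu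
    have hiaw : ⟪a, wv j⟫ = ‖u‖⁻¹ * (Real.sqrt 6 / 2 * u j) := by
      rw [hadef, real_inner_smul_left, inner_wv u huV j]
    have hiaw0 : ⟪a, wv j₀⟫ = ‖u‖⁻¹ * (Real.sqrt 6 / 2 * u j₀) := by
      rw [hadef, real_inner_smul_left, inner_wv u huV j₀]
    have hpa : |⟪a, wv j⟫| ≤ Real.cos (Real.pi / 3 + θ₀) := by
      rw [hiaw, abs_mul, abs_mul, abs_of_nonneg (inv_nonneg.mpr hun.le),
        abs_of_nonneg (by positivity : (0:ℝ) ≤ Real.sqrt 6 / 2)]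
      rw [inv_mul_le_iff₀ hun]
      nlinarith [abs_nonneg (u j)]
    have hqb : (1 / 2 : ℝ) ≤ ⟪-(wv j₀), wv j⟫ := by
      rw [inner_neg_left, wv_inner (Ne.symm hj)]
      norm_num
    have hPQ' : Real.cos (Real.pi / 3 + θ₀) ≤ 1 / 2 := by
      rw [← Real.cos_pi_div_three]
      exact Real.cos_le_cos_of_nonneg_of_le_pi (by positivity) (by linarith) (by linarith)
    have hest := inner_est ha (by rw [norm_neg, wv_norm]) (wv_norm j) hcosα.le hPQ' hpa hqb
    -- simplify the RHS to cos θ₀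
    have hs1 : Real.sqrt (1 - Real.cos (Real.pi / 3 + θ₀) ^ 2)
        = Real.sin (Real.pi / 3 + θ₀) :=
      (Real.sin_eq_sqrt_one_sub_cos_sq hα0 (by linarith)).symm
    have hs2 : Real.sqrt (1 - (1 / 2 : ℝ) ^ 2) = Real.sin (Real.pi / 3) := by
      rw [Real.sin_pi_div_three]
      rw [show (1 - (1/2:ℝ)^2) = (Real.sqrt 3 / 2) ^ 2 by
        rw [div_pow, div_pow, Real.sq_sqrt (by norm_num : (0:ℝ) ≤ 3)]; norm_num]
      exact Real.sqrt_sq (by positivity)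
    rw [hs1, hs2, ← Real.cos_pi_div_three, ← Real.cos_sub] at hest
    have : Real.pi / 3 + θ₀ - Real.pi / 3 = θ₀ := by ring
    rw [this] at hest
    rw [inner_neg_right, abs_neg, hiaw0, abs_mul, abs_mul,
      abs_of_nonneg (inv_nonneg.mpr hun.le),
      abs_of_nonneg (by positivity : (0:ℝ) ≤ Real.sqrt 6 / 2),
      inv_mul_le_iff₀ hun] at hest
    have hk : Real.sqrt 6 / 2 * (Real.sqrt 6 / 3 * ‖u‖ * Real.cos θ₀)
        = ‖u‖ * Real.cos θ₀ := by
      linear_combination ‖u‖ * Real.cos θ₀ / 6 * h6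
    have h2 := mul_lt_mul_of_pos_left hc (show (0:ℝ) < Real.sqrt 6 / 2 by positivity)
    rw [hk] at h2
    have hcosθ : 0 < Real.cos θ₀ := lt_of_lt_of_le hcosα hmono2
    nlinarith

private lemma final_sq {x y I s c : ℝ} (hx : 0 ≤ x) (hy : 0 ≤ y)
    (hI : -(c * (x * y)) ≤ I) (hsc : s ^ 2 = 1 - c ^ 2) :
    (s * x) ^ 2 ≤ x ^ 2 + 2 * I + y ^ 2 := by
  nlinarith [sq_nonneg (y - c * x)]

private lemma le_of_sq_le' {a n : ℝ} (h : a ^ 2 ≤ n ^ 2) (ha : 0 ≤ a) (hn : 0 ≤ n) :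
    a ≤ n := by nlinarith

/-- `U_γ^j ⊆ W_{γ,0}`: the degenerate double cone at a point `γ ∈ Γ` is contained
in the Whitney region `W_{γ,0}`. -/
theorem cone_subset_whitney (θ₀ : ℝ) (hθ0 : 0 ≤ θ₀) (hθ6 : θ₀ < Real.pi / 6)
    (j₀ : Fin 3) (Γ : Set (EuclideanSpace ℝ (Fin 3)))
    (hΓV : Γ ⊆ {ξ : EuclideanSpace ℝ (Fin 3) | ξ 0 + ξ 1 + ξ 2 = 0})
    (hclosed : IsClosed Γ)
    (hcone : ∀ γ ∈ Γ, ∀ γ' ∈ Γ, γ ≠ γ' →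
      Real.sqrt 6 / 3 * ‖γ - γ'‖ * Real.cos θ₀ < |(γ - γ') j₀|)
    (θ₁ δ₁ δ₂ : ℝ)
    (hθ₁ : θ₁ = Real.pi / 18 - θ₀ / 3)
    (hδ₁ : δ₁ = Real.sin θ₁)
    (hδ₂ : δ₂ = Real.sqrt 6 / 3 * Real.cos (Real.pi / 3 + θ₀ + θ₁)) :
    ∀ γ ∈ Γ, ∀ j : Fin 3,
      {β ∈ {ξ : EuclideanSpace ℝ (Fin 3) | ξ 0 + ξ 1 + ξ 2 = 0} |
          |β j - γ j| ≤ δ₂ * ‖β - γ‖} ⊆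
      {β ∈ {ξ : EuclideanSpace ℝ (Fin 3) | ξ 0 + ξ 1 + ξ 2 = 0} |
          ‖β - γ‖ ≤ (1 / δ₁) * infDist β Γ} := by
  intro γ hγ j β hβ
  obtain ⟨hβV, hβj⟩ := hβ
  have hβV' : β 0 + β 1 + β 2 = 0 := hβV
  have hγV : γ 0 + γ 1 + γ 2 = 0 := hΓV hγ
  have hπ := Real.pi_pos
  have h6 : Real.sqrt 6 * Real.sqrt 6 = 6 := Real.mul_self_sqrt (by norm_num)
  have hθ₁pos : 0 < θ₁ := by rw [hθ₁]; linarith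
  have hsum : Real.pi / 3 + θ₀ + θ₁ < Real.pi / 2 := by rw [hθ₁]; linarith
  have hδ₁pos : 0 < δ₁ := by
    rw [hδ₁]; exact Real.sin_pos_of_pos_of_lt_pi hθ₁pos (by linarith)
  have hδ₁le : δ₁ ≤ 1 := by rw [hδ₁]; exact Real.sin_le_one θ₁
  refine ⟨hβV, ?_⟩
  have hmain : δ₁ * ‖β - γ‖ ≤ infDist β Γ := by
    rw [Metric.infDist_eq_iInf]
    haveI : Nonempty Γ := ⟨⟨γ, hγ⟩⟩
    apply le_ciInf
    rintro ⟨γ', hγ'⟩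
    simp only
    rw [dist_eq_norm]
    rcases eq_or_ne β γ with rfl | hv
    · simp only [sub_self, norm_zero, mul_zero]
      exact norm_nonneg _
    rcases eq_or_ne γ' γ with rfl | hne
    · nlinarith [norm_nonneg (β - γ'), hδ₁pos]
    set v := β - γ with hvdef
    set u := γ - γ' with hudef
    have hvu : β - γ' = v + u := by rw [hvdef, hudef]; abel
    have hγ'V : γ' 0 + γ' 1 + γ' 2 = 0 := hΓV hγ'
    have hvV : v 0 + v 1 + v 2 = 0 := by
      show (β 0 - γ 0) + (β 1 - γ 1) + (β 2 - γ 2) = 0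
      linarith
    have huV : u 0 + u 1 + u 2 = 0 := by
      show (γ 0 - γ' 0) + (γ 1 - γ' 1) + (γ 2 - γ' 2) = 0
      linarith
    have hu0 : u ≠ 0 := sub_ne_zero.mpr (Ne.symm hne)
    have hv0 : v ≠ 0 := sub_ne_zero.mpr hv
    have hun : 0 < ‖u‖ := norm_pos_iff.mpr hu0
    have hvn : 0 < ‖v‖ := norm_pos_iff.mpr hv0
    have hc : Real.sqrt 6 / 3 * ‖u‖ * Real.cos θ₀ < |u j₀| :=
      hcone γ hγ γ' hγ' (Ne.symm hne)
    have hA := compA hθ0 hθ6 u huV hu0 hc j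
    have hα0 : (0:ℝ) ≤ Real.pi / 3 + θ₀ := by linarith
    have hcosQ : 0 < Real.cos (Real.pi / 3 + θ₀) :=
      Real.cos_pos_of_mem_Ioo ⟨by linarith, by linarith⟩
    have hcosP : 0 < Real.cos (Real.pi / 3 + θ₀ + θ₁) :=
      Real.cos_pos_of_mem_Ioo ⟨by linarith, hsum⟩
    have hPQ : Real.cos (Real.pi / 3 + θ₀ + θ₁) ≤ Real.cos (Real.pi / 3 + θ₀) :=
      Real.cos_le_cos_of_nonneg_of_le_pi hα0 (by linarith) (by linarith)
    set a : EuclideanSpace ℝ (Fin 3) := (‖v‖ : ℝ)⁻¹ • v with hadef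
    have ha : ‖a‖ = 1 := norm_smul_inv_norm hv0
    set b0 : EuclideanSpace ℝ (Fin 3) := (‖u‖ : ℝ)⁻¹ • u with hb0def
    have hb0 : ‖b0‖ = 1 := norm_smul_inv_norm hu0
    have hiav : ⟪a, wv j⟫ = ‖v‖⁻¹ * (Real.sqrt 6 / 2 * v j) := by
      rw [hadef, real_inner_smul_left, inner_wv v hvV j]
    have hib0 : ⟪b0, wv j⟫ = ‖u‖⁻¹ * (Real.sqrt 6 / 2 * u j) := by
      rw [hb0def, real_inner_smul_left, inner_wv u huV j]
    have hvj : |v j| ≤ δ₂ * ‖v‖ := hβj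
    have hpa : |⟪a, wv j⟫| ≤ Real.cos (Real.pi / 3 + θ₀ + θ₁) := by
      rw [hiav, abs_mul, abs_mul, abs_of_nonneg (inv_nonneg.mpr hvn.le),
        abs_of_nonneg (by positivity : (0:ℝ) ≤ Real.sqrt 6 / 2),
        inv_mul_le_iff₀ hvn]
      rw [hδ₂] at hvj
      have h2 := mul_le_mul_of_nonneg_left hvj
        (show (0:ℝ) ≤ Real.sqrt 6 / 2 by positivity)
      have hk : Real.sqrt 6 / 2 *
          (Real.sqrt 6 / 3 * Real.cos (Real.pi / 3 + θ₀ + θ₁) * ‖v‖)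
          = Real.cos (Real.pi / 3 + θ₀ + θ₁) * ‖v‖ := by
        linear_combination Real.cos (Real.pi / 3 + θ₀ + θ₁) * ‖v‖ / 6 * h6
      linarith [hk ▸ h2]
    have hqb0 : Real.cos (Real.pi / 3 + θ₀) ≤ |⟪b0, wv j⟫| := by
      rw [hib0, abs_mul, abs_mul, abs_of_nonneg (inv_nonneg.mpr hun.le),
        abs_of_nonneg (by positivity : (0:ℝ) ≤ Real.sqrt 6 / 2)]
      have h1 : Real.cos (Real.pi / 3 + θ₀) * ‖u‖ ≤ Real.sqrt 6 / 2 * |u j| := by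
        have h2 := mul_le_mul_of_nonneg_left hA
          (show (0:ℝ) ≤ Real.sqrt 6 / 2 by positivity)
        have hk : Real.sqrt 6 / 2 * (Real.sqrt 6 / 3 * Real.cos (Real.pi / 3 + θ₀) * ‖u‖)
            = Real.cos (Real.pi / 3 + θ₀) * ‖u‖ := by
          linear_combination Real.cos (Real.pi / 3 + θ₀) * ‖u‖ / 6 * h6
        linarith [hk ▸ h2]
      calc Real.cos (Real.pi / 3 + θ₀)
          = ‖u‖⁻¹ * (Real.cos (Real.pi / 3 + θ₀) * ‖u‖) := by field_simp
        _ ≤ ‖u‖⁻¹ * (Real.sqrt 6 / 2 * |u j|) :=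
            mul_le_mul_of_nonneg_left h1 (inv_nonneg.mpr hun.le)
    have hbex : ∃ b : EuclideanSpace ℝ (Fin 3), ‖b‖ = 1 ∧
        Real.cos (Real.pi / 3 + θ₀) ≤ ⟪b, wv j⟫ ∧ |⟪a, b⟫| = |⟪a, b0⟫| := by
      rcases le_or_gt 0 (⟪b0, wv j⟫) with hsgn | hsgn
      · exact ⟨b0, hb0, by rwa [abs_of_nonneg hsgn] at hqb0, rfl⟩
      · refine ⟨-b0, by rw [norm_neg, hb0], ?_, by rw [inner_neg_right, abs_neg]⟩
        rw [inner_neg_left]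
        rwa [abs_of_neg hsgn] at hqb0
    obtain ⟨b, hb, hqb, habs⟩ := hbex
    have hest := inner_est ha hb (wv_norm j) hcosP.le hPQ hpa hqb
    have hs1 : Real.sqrt (1 - Real.cos (Real.pi / 3 + θ₀ + θ₁) ^ 2)
        = Real.sin (Real.pi / 3 + θ₀ + θ₁) :=
      (Real.sin_eq_sqrt_one_sub_cos_sq (by linarith) (by linarith)).symm
    have hs2 : Real.sqrt (1 - Real.cos (Real.pi / 3 + θ₀) ^ 2)
        = Real.sin (Real.pi / 3 + θ₀) :=
      (Real.sin_eq_sqrt_one_sub_cos_sq hα0 (by linarith)).symm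
    rw [hs1, hs2, ← Real.cos_sub,
      show Real.pi / 3 + θ₀ + θ₁ - (Real.pi / 3 + θ₀) = θ₁ by ring, habs] at hest
    have hiab : ⟪a, b0⟫ = ‖v‖⁻¹ * (‖u‖⁻¹ * ⟪v, u⟫) := by
      rw [hadef, hb0def, real_inner_smul_left, real_inner_smul_right]
    have hvu_bound : |⟪v, u⟫| ≤ Real.cos θ₁ * (‖v‖ * ‖u‖) := by
      rw [hiab, abs_mul, abs_mul, abs_of_nonneg (inv_nonneg.mpr hvn.le),
        abs_of_nonneg (inv_nonneg.mpr hun.le)] at hest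
      calc |⟪v, u⟫| = ‖v‖ * ‖u‖ * (‖v‖⁻¹ * (‖u‖⁻¹ * |⟪v, u⟫|)) := by
            field_simp
          _ ≤ ‖v‖ * ‖u‖ * Real.cos θ₁ :=
            mul_le_mul_of_nonneg_left hest (by positivity)
          _ = Real.cos θ₁ * (‖v‖ * ‖u‖) := by ring
    have hnsq : ‖v + u‖ ^ 2 = ‖v‖ ^ 2 + 2 * ⟪v, u⟫ + ‖u‖ ^ 2 := norm_add_sq_real v u
    have hsin2 : Real.sin θ₁ ^ 2 = 1 - Real.cos θ₁ ^ 2 := by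
      linarith [Real.sin_sq_add_cos_sq θ₁]
    have hinner_lb : -(Real.cos θ₁ * (‖v‖ * ‖u‖)) ≤ ⟪v, u⟫ := (abs_le.mp hvu_bound).1
    have hsq : (δ₁ * ‖v‖) ^ 2 ≤ ‖v + u‖ ^ 2 := by
      rw [hδ₁, hnsq]
      exact final_sq (norm_nonneg v) (norm_nonneg u) hinner_lb hsin2
    have hfin : δ₁ * ‖v‖ ≤ ‖v + u‖ :=
      le_of_sq_le' hsq (mul_nonneg hδ₁pos.le (norm_nonneg v)) (norm_nonneg _)
    rw [hvu]
    exact hfin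
  rw [show (1 / δ₁) * infDist β Γ = infDist β Γ / δ₁ by ring, le_div_iff₀ hδ₁pos, mul_comm]
  exact hmain
end

section
/- Let γ, γ', γ'' ∈ Γ with γ_j ≤ γ''_j ≤ γ'_j ≤ γ_j + δ₀(1 - δ₁)t. Then W_{γ'',t} ⊆ W_{γ, δ₁ t} ∪ W_{γ', δ₁ t}. -/
open Metric

lemma wrc_normsq (x : EuclideanSpace ℝ (Fin 3)) :
    ‖x‖^2 = (x 0)^2 + (x 1)^2 + (x 2)^2 := by
  rw [EuclideanSpace.norm_eq, Real.sq_sqrt (by positivity)]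
  simp [Fin.sum_univ_three, sq_abs]

lemma wrc_inner (x y : EuclideanSpace ℝ (Fin 3)) :
    (inner ℝ x y : ℝ) = x 0 * y 0 + x 1 * y 1 + x 2 * y 2 := by
  simp [PiLp.inner_apply, Fin.sum_univ_three, RCLike.inner_apply, conj_trivial]
  ring

lemma wrc_ext2 (x y : EuclideanSpace ℝ (Fin 3))
    (hx : x 0 + x 1 + x 2 = 0) (hy : y 0 + y 1 + y 2 = 0) (i i' : Fin 3) (h : i ≠ i') :
    ∃ cx cy : ℝ, x i + x i' + cx = 0 ∧ y i + y i' + cy = 0 ∧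
      (x i)^2 + (x i')^2 + cx^2 = ‖x‖^2 ∧ (y i)^2 + (y i')^2 + cy^2 = ‖y‖^2 ∧
      (inner ℝ x y : ℝ) = x i * y i + x i' * y i' + cx * cy := by
  have hnx := wrc_normsq x; have hny := wrc_normsq y; have hin := wrc_inner x y
  have hi : i = 0 ∨ i = 1 ∨ i = 2 := by omega
  have hi' : i' = 0 ∨ i' = 1 ∨ i' = 2 := by omega
  rcases hi with rfl|rfl|rfl <;> rcases hi' with rfl|rfl|rfl <;>
    first
    | exact absurd rfl h
    | exact ⟨x 2, y 2, by linarith, by linarith, by linarith, by linarith, by linarith⟩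
    | exact ⟨x 1, y 1, by linarith, by linarith, by linarith, by linarith, by linarith⟩
    | exact ⟨x 0, y 0, by linarith, by linarith, by linarith, by linarith, by linarith⟩

lemma wrc_coord (C S n a b c : ℝ) (hsum : a + b + c = 0) (hn : a^2+b^2+c^2 = n^2)
    (hn0 : 0 ≤ n) (hC : Real.sqrt 3 / 2 < C) (hS : 0 ≤ S) (hCS : C^2 + S^2 = 1)
    (ha : Real.sqrt 6 / 3 * n * C ≤ |a|) :
    (Real.sqrt 6 / 6 * C - Real.sqrt 2 / 2 * S) * n ≤ |b| := by
  have h6 : (Real.sqrt 6)^2 = 6 := Real.sq_sqrt (by norm_num)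
  have h3 : (Real.sqrt 3)^2 = 3 := Real.sq_sqrt (by norm_num)
  have h2 : (Real.sqrt 2)^2 = 2 := Real.sq_sqrt (by norm_num)
  have h3' : (0:ℝ) ≤ Real.sqrt 3 := Real.sqrt_nonneg 3
  have h2' : (0:ℝ) ≤ Real.sqrt 2 := Real.sqrt_nonneg 2
  have h6' : (0:ℝ) ≤ Real.sqrt 6 := Real.sqrt_nonneg 6
  have hC0 : 0 < C := by nlinarith
  have ha2 : 2/3 * C^2 * n^2 ≤ a^2 := by
    have : (Real.sqrt 6 / 3 * n * C)^2 ≤ |a|^2 := by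
      apply pow_le_pow_left₀ (by positivity) ha
    rw [sq_abs] at this; nlinarith
  have hbca : (b-c)^2 = 2*n^2 - 3*a^2 := by
    have hc : c = -a-b := by linarith
    rw [hc] at hn ⊢; linear_combination 2*hn
  have hS2 : S^2*n^2 = n^2 - C^2*n^2 := by linear_combination n^2*hCS
  have hrhs : (Real.sqrt 2 * S * n)^2 = 2 * S^2 * n^2 := by
    rw [mul_pow, mul_pow, h2]
  have hbc : (b - c)^2 ≤ (Real.sqrt 2 * S * n)^2 := by
    rw [hrhs, hbca]; linarith
  have hbc' : |b - c| ≤ Real.sqrt 2 * S * n := by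
    have := Real.sqrt_le_sqrt hbc
    rwa [Real.sqrt_sq_eq_abs, Real.sqrt_sq (by positivity)] at this
  have hab : a = -(2*b - (b - c)) := by linarith
  have htri : |a| ≤ 2 * |b| + |b - c| := by
    rw [hab, abs_neg]
    calc |2*b - (b-c)| ≤ |2*b| + |b-c| := abs_sub _ _
    _ = 2*|b| + |b-c| := by rw [abs_mul]; norm_num
  nlinarith [abs_nonneg b]

lemma wrc_coord_same (C S n a : ℝ) (hC0 : 0 ≤ C) (hS : 0 ≤ S) (hn0 : 0 ≤ n)
    (ha : Real.sqrt 6 / 3 * n * C ≤ |a|) :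
    (Real.sqrt 6 / 6 * C - Real.sqrt 2 / 2 * S) * n ≤ |a| := by
  nlinarith [mul_nonneg (mul_nonneg (Real.sqrt_nonneg 2) hS) hn0,
    mul_nonneg (mul_nonneg (Real.sqrt_nonneg 6) hC0) hn0]

lemma wrc_sign (a b c n : ℝ) (hsum : a + b + c = 0) (hn : a^2+b^2+c^2 = n^2)
    (h2 : n^2 < 2*a^2) (hb : 0 < b) : a < 0 := by
  by_contra h
  push_neg at h
  nlinarith

lemma wrc_half_real (a0 a1 a2 b0 b1 b2 X Y : ℝ)
    (hsx : a0+a1+a2=0) (hsy : b0+b1+b2=0)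
    (hX : a0^2+a1^2+a2^2 = X^2) (hY : b0^2+b1^2+b2^2 = Y^2)
    (hX0 : 0 ≤ X) (hY0 : 0 ≤ Y)
    (ha : X^2 ≤ 2*a0^2) (hb : Y^2 ≤ 2*b0^2) (hab : 0 < a0*b0) :
    X*Y/2 ≤ a0*b0 + a1*b1 + a2*b2 := by
  have ha0 : a0 ≠ 0 := by rintro rfl; simp at hab
  have hb0 : b0 ≠ 0 := by rintro rfl; simp at hab
  have hXpos : 0 < X := by
    rcases hX0.lt_or_eq with h | h; exact h
    exfalso; have := sq_pos_of_ne_zero ha0; nlinarith [sq_nonneg a1, sq_nonneg a2]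
  have hYpos : 0 < Y := by
    rcases hY0.lt_or_eq with h | h; exact h
    exfalso; have := sq_pos_of_ne_zero hb0; nlinarith [sq_nonneg b1, sq_nonneg b2]
  have hda : (a1-a2)^2 = 2*X^2 - 3*a0^2 := by
    have hc : a2 = -a0-a1 := by linarith
    rw [hc] at hX ⊢; linear_combination 2*hX
  have hdb : (b1-b2)^2 = 2*Y^2 - 3*b0^2 := by
    have hc : b2 = -b0-b1 := by linarith
    rw [hc] at hY ⊢; linear_combination 2*hY
  have hd : (a1-a2)^2 ≤ X^2/2 := by rw [hda]; linarith
  have he : (b1-b2)^2 ≤ Y^2/2 := by rw [hdb]; linarith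
  have hprod : X*Y/2 ≤ a0*b0 := by
    have h1 : X^2*Y^2 ≤ 2*a0^2*(2*b0^2) :=
      mul_le_mul ha hb (sq_nonneg Y) (by positivity)
    nlinarith [mul_nonneg hX0 hY0]
  have hde : -(X*Y/2) ≤ (a1-a2)*(b1-b2) := by
    have h1 : (a1-a2)^2*Y^2 ≤ X^2/2*Y^2 := mul_le_mul_of_nonneg_right hd (sq_nonneg Y)
    have h2 : (b1-b2)^2*X^2 ≤ Y^2/2*X^2 := mul_le_mul_of_nonneg_right he (sq_nonneg X)
    nlinarith [sq_nonneg ((a1-a2)*Y + (b1-b2)*X), mul_pos hXpos hYpos]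
  have key : a0*b0 + a1*b1 + a2*b2 = 3/2*(a0*b0) + 1/2*((a1-a2)*(b1-b2)) := by
    linear_combination ((b1+b2)/2)*hsx - (a0/2)*hsy
  rw [key]; linarith

lemma wrc_conesq (C n a : ℝ) (hC2 : 3/4 < C^2) (hC0 : 0 ≤ C) (hn0 : 0 ≤ n)
    (h : Real.sqrt 6/3*n*C < |a|) : n^2 < 2*a^2 := by
  have h6 : (Real.sqrt 6)^2 = 6 := Real.sq_sqrt (by norm_num)
  have h6' : (0:ℝ) ≤ Real.sqrt 6 := Real.sqrt_nonneg 6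
  have h1 : (Real.sqrt 6/3*n*C)^2 < |a|^2 :=
    pow_lt_pow_left₀ h (mul_nonneg (mul_nonneg (by positivity) hn0) hC0) (by norm_num)
  rw [sq_abs] at h1
  nlinarith [sq_nonneg n, sq_nonneg (n*C)]

set_option maxHeartbeats 2000000 in
/-- Geometry of tents, part (1): if `γ_j ≤ γ''_j ≤ γ'_j ≤ γ_j + δ₀(1-δ₁)t` for points
of Γ, then `W_{γ'',t} ⊆ W_{γ,δ₁t} ∪ W_{γ',δ₁t}`. -/
theorem whitney_region_covering (θ₀ : ℝ) (hθ0 : 0 ≤ θ₀) (hθ6 : θ₀ < Real.pi / 6)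
    (j₀ : Fin 3) (Γ : Set (EuclideanSpace ℝ (Fin 3)))
    (hΓV : Γ ⊆ {ξ : EuclideanSpace ℝ (Fin 3) | ξ 0 + ξ 1 + ξ 2 = 0})
    (hclosed : IsClosed Γ)
    (hcone : ∀ γ ∈ Γ, ∀ γ' ∈ Γ, γ ≠ γ' →
      Real.sqrt 6 / 3 * ‖γ - γ'‖ * Real.cos θ₀ < |(γ - γ') j₀|)
    (θ₁ δ₀ δ₁ : ℝ)
    (hθ₁ : θ₁ = Real.pi / 18 - θ₀ / 3)
    (hδ₀ : δ₀ = Real.sqrt 6 / 3 * Real.cos (θ₀ + Real.pi / 3))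
    (hδ₁ : δ₁ = Real.sin θ₁)
    (t : ℝ) (ht : 0 < t)
    (γ γ' γ'' : EuclideanSpace ℝ (Fin 3))
    (hγ : γ ∈ Γ) (hγ' : γ' ∈ Γ) (hγ'' : γ'' ∈ Γ)
    (j : Fin 3)
    (h1 : γ j ≤ γ'' j) (h2 : γ'' j ≤ γ' j) (h3 : γ' j ≤ γ j + δ₀ * (1 - δ₁) * t) :
    {β ∈ {ξ : EuclideanSpace ℝ (Fin 3) | ξ 0 + ξ 1 + ξ 2 = 0} |
        t ≤ ‖β - γ''‖ ∧ ‖β - γ''‖ ≤ (1 / δ₁) * infDist β Γ} ⊆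
    {β ∈ {ξ : EuclideanSpace ℝ (Fin 3) | ξ 0 + ξ 1 + ξ 2 = 0} |
        δ₁ * t ≤ ‖β - γ‖ ∧ ‖β - γ‖ ≤ (1 / δ₁) * infDist β Γ} ∪
    {β ∈ {ξ : EuclideanSpace ℝ (Fin 3) | ξ 0 + ξ 1 + ξ 2 = 0} |
        δ₁ * t ≤ ‖β - γ'‖ ∧ ‖β - γ'‖ ≤ (1 / δ₁) * infDist β Γ} := by
  have hπ : (0:ℝ) < Real.pi := Real.pi_pos
  -- basic trig facts
  have hCgt : Real.sqrt 3 / 2 < Real.cos θ₀ := by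
    rw [← Real.cos_pi_div_six]
    exact Real.cos_lt_cos_of_nonneg_of_le_pi hθ0 (by linarith) hθ6
  have hC1 : Real.cos θ₀ ≤ 1 := Real.cos_le_one _
  have hC0 : 0 ≤ Real.cos θ₀ := by nlinarith [Real.sqrt_nonneg 3]
  have hS0 : 0 ≤ Real.sin θ₀ := Real.sin_nonneg_of_nonneg_of_le_pi hθ0 (by linarith)
  have hCS : (Real.cos θ₀)^2 + (Real.sin θ₀)^2 = 1 := by
    have := Real.sin_sq_add_cos_sq θ₀; linarith
  have hC2 : 3/4 < (Real.cos θ₀)^2 := by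
    have h3 : (Real.sqrt 3)^2 = 3 := Real.sq_sqrt (by norm_num)
    nlinarith [Real.sqrt_nonneg 3]
  -- δ₁ facts
  have hθ₁pos : 0 < θ₁ := by rw [hθ₁]; linarith
  have hδ₁pos : 0 < δ₁ := by
    rw [hδ₁]; exact Real.sin_pos_of_pos_of_lt_pi hθ₁pos (by rw [hθ₁]; linarith)
  have hδ₁lt : δ₁ < 1/2 := by
    rw [hδ₁, ← Real.sin_pi_div_six]
    exact Real.sin_lt_sin_of_lt_of_le_pi_div_two (by linarith) (by linarith)
      (by rw [hθ₁]; linarith)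
  -- δ₀ facts
  have hδ₀pos : 0 < δ₀ := by
    rw [hδ₀]
    have : 0 < Real.cos (θ₀ + Real.pi/3) :=
      Real.cos_pos_of_mem_Ioo ⟨by linarith, by linarith⟩
    positivity
  have h63 : Real.sqrt 6 * Real.sqrt 3 = 3 * Real.sqrt 2 := by
    rw [← Real.sqrt_mul (by norm_num : (0:ℝ) ≤ 6) 3,
      show (6*3:ℝ) = 3^2 * 2 by norm_num,
      Real.sqrt_mul (by positivity) 2, Real.sqrt_sq (by norm_num : (0:ℝ) ≤ 3)]
  have hδ₀eq : δ₀ = Real.sqrt 6 / 6 * Real.cos θ₀ - Real.sqrt 2 / 2 * Real.sin θ₀ := by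
    rw [hδ₀, Real.cos_add, Real.cos_pi_div_three, Real.sin_pi_div_three]
    linear_combination (-(Real.sin θ₀)/6) * h63
  -- sum-zero of differences
  have hV : ∀ p ∈ Γ, ∀ q ∈ Γ, (p - q) 0 + (p - q) 1 + (p - q) 2 = 0 := by
    intro p hp q hq
    have h1 := hΓV hp; have h2 := hΓV hq
    simp only [Set.mem_setOf_eq] at h1 h2
    have e : ∀ i : Fin 3, (p - q) i = p i - q i := fun i => rfl
    rw [e 0, e 1, e 2]; linarith
  -- fact (i)
  have hfacti : ∀ p ∈ Γ, ∀ q ∈ Γ, p ≠ q → ∀ i : Fin 3, δ₀ * ‖p - q‖ ≤ |(p - q) i| := by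
    intro p hp q hq hne i
    have hc := (hcone p hp q hq hne).le
    have hsum0 := hV p hp q hq
    rw [hδ₀eq]
    by_cases hij : i = j₀
    · subst hij; exact wrc_coord_same _ _ _ _ hC0 hS0 (norm_nonneg _) hc
    · obtain ⟨cx, _, hsx, _, hqx, _, _⟩ :=
        wrc_ext2 (p-q) (p-q) hsum0 hsum0 j₀ i (Ne.symm hij)
      exact wrc_coord _ _ _ _ _ _ hsx hqx (norm_nonneg _) hCgt hS0 hCS hc
  -- corollary of fact (i)
  have hclose : ∀ p ∈ Γ, ∀ q ∈ Γ, |p j - q j| ≤ δ₀ * ((1-δ₁)*t) → ‖p - q‖ ≤ (1-δ₁)*t := by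
    intro p hp q hq hco
    rcases eq_or_ne p q with rfl | hne
    · simp; nlinarith
    · have := hfacti p hp q hq hne j
      have e : (p - q) j = p j - q j := rfl
      rw [e] at this
      nlinarith
  -- inner product lower bound for consecutive gaps
  have hhalf : ∀ p ∈ Γ, ∀ q ∈ Γ, ∀ r ∈ Γ, 0 < (q-p) j → 0 < (r-q) j →
      ‖q-p‖*‖r-q‖/2 ≤ (inner ℝ (q-p) (r-q) : ℝ) := by
    intro p hp q hq r hr hxj hyj
    have hpq : q ≠ p := by
      intro he; rw [he] at hxj; simp at hxj
    have hqr : r ≠ q := by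
      intro he; rw [he] at hyj; simp at hyj
    have hcx := hcone q hq p hp hpq
    have hcy := hcone r hr q hq hqr
    have hsx0 := hV q hq p hp
    have hsy0 := hV r hr q hq
    have hnx0 : 0 < ‖q - p‖ := by
      rw [norm_pos_iff]; exact sub_ne_zero_of_ne hpq
    have hny0 : 0 < ‖r - q‖ := by
      rw [norm_pos_iff]; exact sub_ne_zero_of_ne hqr
    have hx2 : ‖q-p‖^2 < 2*((q-p) j₀)^2 :=
      wrc_conesq _ _ _ hC2 hC0 (norm_nonneg _) hcx
    have hy2 : ‖r-q‖^2 < 2*((r-q) j₀)^2 :=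
      wrc_conesq _ _ _ hC2 hC0 (norm_nonneg _) hcy
    have hsgn : 0 < (q-p) j₀ * ((r-q) j₀) := by
      by_cases hjj : j = j₀
      · subst hjj; exact mul_pos hxj hyj
      · obtain ⟨cx, cy, hsx, hsy, hqx, hqy, _⟩ :=
          wrc_ext2 (q-p) (r-q) hsx0 hsy0 j₀ j (Ne.symm hjj)
        have hxneg : (q-p) j₀ < 0 := wrc_sign _ _ _ _ hsx hqx (by linarith) hxj
        have hyneg : (r-q) j₀ < 0 := wrc_sign _ _ _ _ hsy hqy (by linarith) hyj
        exact mul_pos_of_neg_of_neg hxneg hyneg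
    obtain ⟨i', hi'⟩ : ∃ i' : Fin 3, j₀ ≠ i' := by
      have h0 : j₀ = 0 ∨ j₀ = 1 ∨ j₀ = 2 := by omega
      rcases h0 with rfl|rfl|rfl
      exacts [⟨1, by omega⟩, ⟨0, by omega⟩, ⟨0, by omega⟩]
    obtain ⟨cx, cy, hsx, hsy, hqx, hqy, hinn⟩ := wrc_ext2 (q-p) (r-q) hsx0 hsy0 j₀ i' hi'
    rw [hinn]
    exact wrc_half_real _ _ _ _ _ _ _ _ hsx hsy hqx hqy (norm_nonneg _) (norm_nonneg _)
      hx2.le hy2.le hsgn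
  -- order-distance inequality, both orientations
  have hGap : ∀ p ∈ Γ, ∀ q ∈ Γ, ∀ r ∈ Γ, p j ≤ q j → q j ≤ r j →
      ‖q - p‖ + δ₁ * ‖r - q‖ ≤ ‖r - p‖ ∧ ‖r - q‖ + δ₁ * ‖q - p‖ ≤ ‖r - p‖ := by
    intro p hp q hq r hr hpq hqr
    have hd1 : 0 ≤ (1 - δ₁) := by linarith
    rcases eq_or_ne p q with rfl | hne1
    · rw [sub_self, norm_zero]
      have := mul_nonneg hd1 (norm_nonneg (r - p))
      constructor <;> nlinarith [norm_nonneg (r - p)]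
    rcases eq_or_ne q r with rfl | hne2
    · rw [sub_self, norm_zero]
      have := mul_nonneg hd1 (norm_nonneg (q - p))
      constructor <;> nlinarith [norm_nonneg (q - p)]
    have hxj : 0 < (q - p) j := by
      have h0 := hfacti q hq p hp (Ne.symm hne1) j
      have hn : 0 < ‖q - p‖ := by
        rw [norm_pos_iff]; exact sub_ne_zero_of_ne (Ne.symm hne1)
      have habs : 0 < |(q-p) j| := lt_of_lt_of_le (mul_pos hδ₀pos hn) h0
      have hco : (q-p) j = q j - p j := rfl
      exact lt_of_le_of_ne (by rw [hco]; linarith) (Ne.symm (abs_pos.mp habs))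
    have hyj : 0 < (r - q) j := by
      have h0 := hfacti r hr q hq (Ne.symm hne2) j
      have hn : 0 < ‖r - q‖ := by
        rw [norm_pos_iff]; exact sub_ne_zero_of_ne (Ne.symm hne2)
      have habs : 0 < |(r-q) j| := lt_of_lt_of_le (mul_pos hδ₀pos hn) h0
      have hco : (r-q) j = r j - q j := rfl
      exact lt_of_le_of_ne (by rw [hco]; linarith) (Ne.symm (abs_pos.mp habs))
    have hin := hhalf p hp q hq r hr hxj hyj
    have hsum : r - p = (r - q) + (q - p) := by abel
    have hns := norm_add_sq_real (r - q) (q - p)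
    rw [← hsum] at hns
    have hcomm : (inner ℝ (r-q) (q-p) : ℝ) = (inner ℝ (q-p) (r-q) : ℝ) := real_inner_comm _ _
    have hsq : ‖q-p‖^2 + ‖q-p‖*‖r-q‖ + ‖r-q‖^2 ≤ ‖r-p‖^2 := by
      rw [hns, hcomm]; linarith
    have key : ∀ s : ℝ, 0 ≤ s → s^2 ≤ ‖r-p‖^2 → s ≤ ‖r-p‖ := by
      intro s hs hsc
      nlinarith [norm_nonneg (r - p)]
    have hab : 0 ≤ ‖q-p‖*‖r-q‖ := mul_nonneg (norm_nonneg _) (norm_nonneg _)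
    have hq1 : δ₁ * (‖q-p‖*‖r-q‖) ≤ (1/2)*(‖q-p‖*‖r-q‖) :=
      mul_le_mul_of_nonneg_right hδ₁lt.le hab
    have hq2 : δ₁^2 ≤ 1/4 := by nlinarith
    have hq3 : δ₁^2 * ‖r-q‖^2 ≤ (1/4) * ‖r-q‖^2 :=
      mul_le_mul_of_nonneg_right hq2 (sq_nonneg _)
    have hq4 : δ₁^2 * ‖q-p‖^2 ≤ (1/4) * ‖q-p‖^2 :=
      mul_le_mul_of_nonneg_right hq2 (sq_nonneg _)
    constructor
    · apply key _ (by positivity) ?_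
      nlinarith [sq_nonneg ‖r-q‖]
    · apply key _ (by positivity) ?_
      nlinarith [sq_nonneg ‖q-p‖]
  -- main argument
  intro β hβ
  obtain ⟨hβV, hβt, hβD⟩ := hβ
  have hdle : ∀ p ∈ Γ, infDist β Γ ≤ ‖β - p‖ := by
    intro p hp; rw [← dist_eq_norm]; exact infDist_le_dist_of_mem hp
  have hδ₁d : δ₁ * ‖β - γ''‖ ≤ infDist β Γ := by
    calc δ₁ * ‖β - γ''‖ ≤ δ₁ * ((1/δ₁) * infDist β Γ) :=
          mul_le_mul_of_nonneg_left hβD hδ₁pos.le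
    _ = infDist β Γ := by field_simp
  have hDd : δ₁ * ((1/δ₁) * infDist β Γ) = infDist β Γ := by field_simp
  have hlow : δ₁ * t ≤ infDist β Γ :=
    le_trans (mul_le_mul_of_nonneg_left hβt hδ₁pos.le) hδ₁d
  have htD : t ≤ (1/δ₁) * infDist β Γ := le_trans hβt hβD
  have hD0 : 0 ≤ (1/δ₁) * infDist β Γ := le_trans (by positivity) htD
  obtain ⟨γs, hγs, hγsd⟩ := hclosed.exists_infDist_eq_dist ⟨γ, hγ⟩ β
  rcases lt_or_ge (γs j) (γ j) with hB | hge
  · -- case B : left member, via Ptolemy with (β, γs, γ, γ'')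
    left
    refine ⟨hβV, le_trans hlow (hdle γ hγ), ?_⟩
    have hg := (hGap γs hγs γ hγ γ'' hγ'' hB.le h1).1
    have hm : γs ≠ γ'' := by
      intro he; rw [he] at hB; exact absurd (lt_of_lt_of_le hB h1) (lt_irrefl _)
    have hmpos : 0 < dist γs γ'' := dist_pos.mpr hm
    have hP := EuclideanGeometry.mul_dist_le_mul_dist_add_mul_dist β γs γ γ''
    -- translate everything into dist
    have e1 : dist β γs = infDist β Γ := hγsd.symm
    have e2 : dist β γ'' ≤ (1/δ₁) * infDist β Γ := by rw [dist_eq_norm]; exact hβD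
    have hg' : dist γ γs + δ₁ * dist γ'' γ ≤ dist γ'' γs := by
      rw [dist_eq_norm, dist_eq_norm, dist_eq_norm]; exact hg
    have hfin : dist β γ * dist γs γ'' ≤ ((1/δ₁) * infDist β Γ) * dist γs γ'' := by
      calc dist β γ * dist γs γ''
          ≤ dist β γs * dist γ γ'' + dist γs γ * dist β γ'' := hP
        _ = infDist β Γ * dist γ'' γ + dist γ γs * dist β γ'' := by
            rw [e1, dist_comm γ γ'', dist_comm γs γ]
        _ ≤ (δ₁ * ((1/δ₁) * infDist β Γ)) * dist γ'' γ
              + dist γ γs * ((1/δ₁) * infDist β Γ) := by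
            rw [hDd]
            exact add_le_add le_rfl (mul_le_mul_of_nonneg_left e2 dist_nonneg)
        _ = ((1/δ₁) * infDist β Γ) * (dist γ γs + δ₁ * dist γ'' γ) := by ring
        _ ≤ ((1/δ₁) * infDist β Γ) * dist γ'' γs := mul_le_mul_of_nonneg_left hg' hD0
        _ = ((1/δ₁) * infDist β Γ) * dist γs γ'' := by rw [dist_comm]
    have := le_of_mul_le_mul_right hfin hmpos
    rwa [dist_eq_norm] at this
  rcases le_or_gt (γs j) (γ' j) with hA | hC
  · -- case A : γ between, left member
    left
    refine ⟨hβV, le_trans hlow (hdle γ hγ), ?_⟩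
    have hco : |γs j - γ j| ≤ δ₀ * ((1-δ₁)*t) := by
      rw [abs_of_nonneg (by linarith)]
      have : δ₀ * (1-δ₁) * t = δ₀ * ((1-δ₁)*t) := by ring
      linarith [h3, this ▸ h3]
    have hcl := hclose γs hγs γ hγ hco
    have htri : ‖β - γ‖ ≤ ‖β - γs‖ + ‖γs - γ‖ := by
      rw [← dist_eq_norm, ← dist_eq_norm, ← dist_eq_norm]
      exact dist_triangle β γs γ
    have e1 : ‖β - γs‖ = infDist β Γ := by rw [← dist_eq_norm]; exact hγsd.symm
    have hmul : δ₁ * t ≤ δ₁ * ((1/δ₁) * infDist β Γ) :=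
      mul_le_mul_of_nonneg_left htD hδ₁pos.le
    rw [hDd] at hmul
    have hexp : (1-δ₁)*t = t - δ₁*t := by ring
    have hfin : ‖β - γ‖ ≤ infDist β Γ + ((1-δ₁)*t) := by
      rw [e1] at htri; linarith
    have h8 : (1-δ₁)*t ≤ (1-δ₁)*((1/δ₁)*infDist β Γ) :=
      mul_le_mul_of_nonneg_left htD (by linarith)
    linarith [hfin, h8, hDd]
  · -- case C : right member, via Ptolemy with (β, γ'', γ', γs)
    right
    refine ⟨hβV, le_trans hlow (hdle γ' hγ'), ?_⟩
    have hg := (hGap γ'' hγ'' γ' hγ' γs hγs h2 hC.le).2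
    have hm : γ'' ≠ γs := by
      intro he; rw [← he] at hC; exact absurd (lt_of_le_of_lt h2 hC) (lt_irrefl _)
    have hmpos : 0 < dist γ'' γs := dist_pos.mpr hm
    have hP := EuclideanGeometry.mul_dist_le_mul_dist_add_mul_dist β γ'' γ' γs
    have e1 : dist β γs = infDist β Γ := hγsd.symm
    have e2 : dist β γ'' ≤ (1/δ₁) * infDist β Γ := by rw [dist_eq_norm]; exact hβD
    have hg' : dist γs γ' + δ₁ * dist γ' γ'' ≤ dist γs γ'' := by
      rw [dist_eq_norm, dist_eq_norm, dist_eq_norm]; exact hg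
    have hfin : dist β γ' * dist γ'' γs ≤ ((1/δ₁) * infDist β Γ) * dist γ'' γs := by
      calc dist β γ' * dist γ'' γs
          ≤ dist β γ'' * dist γ' γs + dist γ'' γ' * dist β γs := hP
        _ = dist β γ'' * dist γs γ' + dist γ' γ'' * infDist β Γ := by
            rw [e1, dist_comm γ' γs, dist_comm γ'' γ']
        _ ≤ ((1/δ₁) * infDist β Γ) * dist γs γ'
              + dist γ' γ'' * (δ₁ * ((1/δ₁) * infDist β Γ)) := by
            rw [hDd]
            exact add_le_add (mul_le_mul_of_nonneg_right e2 dist_nonneg) le_rfl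
        _ = ((1/δ₁) * infDist β Γ) * (dist γs γ' + δ₁ * dist γ' γ'') := by ring
        _ ≤ ((1/δ₁) * infDist β Γ) * dist γs γ'' := mul_le_mul_of_nonneg_left hg' hD0
        _ = ((1/δ₁) * infDist β Γ) * dist γ'' γs := by rw [dist_comm]
    have := le_of_mul_le_mul_right hfin hmpos
    rwa [dist_eq_norm] at this
end

section
/- With the above setup, W_{γ',0} \ W_{γ,t} ⊆ B_t(γ) ∪ (W_{γ',0} \ U_γ^j)^{>γ_j}, where (W_{γ',0} \ U_γ^j)^{>γ_j} denotes the set of points β in W_{γ',0} \ U_γ^j with β_j > γ_j. -/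
/-!
Write `w = β - γ`. If `β ∈ W_{γ',0}` lies neither in `W_{γ,t}` nor in `B_t(γ)`, then some
`g ∈ Γ` has `|β - g| < δ₁ |w|`, and `|β - γ'| < |w|`. In angular terms `w` is within `θ₁` of
`g - γ` and within `π / 2` of `γ' - γ`. By the cone condition both lie within `θ₀` of the line
through `P_V e_{j₀}`, and since `2 θ₀ + θ₁ < π / 2` they lie around the same ray `c` of it, so
`∠(w, c) < θ₀ + θ₁`. The projected basis vectors meet at angles `2π / 3`, and `γ_j ≤ γ'_j` says
`∠(γ' - γ, P_V e_j) ≤ π / 2`; together these force `∠(c, P_V e_j) ≤ π / 3`. Hence `∠(w, P_V e_j) < π / 3 + θ₀ + θ₁`, which says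
`β_j - γ_j > δ₂ |w|`.
-/

open Metric Real InnerProductGeometry
open scoped RealInnerProductSpace

section InnerProductSpace

variable {E : Type*} [NormedAddCommGroup E] [InnerProductSpace ℝ E]

theorem sin_angle_mul_norm_le_norm_sub (x y : E) : sin (angle x y) * ‖x‖ ≤ ‖x - y‖ := by
  have hcos := cos_angle_mul_norm_mul_norm x y
  have hsub := norm_sub_sq_real x y
  have hpyth := sin_sq_add_cos_sq (angle x y)
  refine le_of_sq_le_sq ?_ (norm_nonneg _)
  -- the difference of the squares is `(cos (angle x y) * ‖x‖ - ‖y‖) ^ 2`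
  nlinarith [sq_nonneg (cos (angle x y) * ‖x‖ - ‖y‖)]

theorem angle_le_pi_div_two_of_inner_nonneg {x y : E} (h : 0 ≤ ⟪x, y⟫) :
    angle x y ≤ π / 2 :=
  arccos_le_pi_div_two.2 (div_nonneg h (by positivity))

theorem angle_lt_of_cos_lt {x y : E} {θ : ℝ} (hθ : 0 ≤ θ) (h : cos θ < cos (angle x y)) :
    angle x y < θ := by
  by_contra! hle
  exact (cos_le_cos_of_nonneg_of_le_pi hθ (angle_le_pi x y) hle).not_gt h

theorem angle_lt_of_norm_sub_lt_sin_mul {x y : E} {θ : ℝ} (hθ : 0 ≤ θ)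
    (h : ‖x - y‖ < sin θ * ‖x‖) : angle x y < θ := by
  by_contra! hle
  rcases le_or_gt (angle x y) (π / 2) with hacute | hobtuse
  · have := sin_le_sin_of_le_of_le_pi_div_two (by linarith) hacute hle
    nlinarith [sin_angle_mul_norm_le_norm_sub x y, norm_nonneg x]
  · have hcos : cos (angle x y) < 0 :=
      cos_neg_of_pi_div_two_lt_of_lt hobtuse (by linarith [angle_le_pi x y, pi_pos])
    have hinner : ⟪x, y⟫ ≤ 0 := by
      rw [← cos_angle_mul_norm_mul_norm]
      exact mul_nonpos_of_nonpos_of_nonneg hcos.le (by positivity)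
    have hnorm : ‖x‖ ≤ ‖x - y‖ :=
      le_of_sq_le_sq (by nlinarith [norm_sub_sq_real x y, norm_nonneg y]) (norm_nonneg _)
    nlinarith [sin_le_one θ, norm_nonneg x]

theorem angle_lt_add_of_double_cone {w u u' c : E} {θ₀ θ₁ : ℝ}
    (hu : angle u c < θ₀ ∨ angle u (-c) < θ₀) (hu' : angle u' c < θ₀)
    (hwu : angle w u < θ₁) (hwu' : angle w u' < π / 2) (hθ : 2 * θ₀ + θ₁ ≤ π / 2) :
    angle w c < θ₀ + θ₁ := by
  rcases hu with hu | hu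
  · linarith [angle_le_angle_add_angle w u c]
  · have := angle_le_angle_add_angle w u (-c)
    rw [angle_neg_right w c] at this
    linarith [angle_le_angle_add_angle w u' c]

end InnerProductSpace

/-- `P_V e_k`, the orthogonal projection of the `k`-th basis vector onto `V`. -/
noncomputable def planeAxis (k : Fin 3) : EuclideanSpace ℝ (Fin 3) :=
  WithLp.toLp 2 fun i => if i = k then 2 / 3 else -1 / 3

theorem planeAxis_sum (k : Fin 3) : planeAxis k 0 + planeAxis k 1 + planeAxis k 2 = 0 := by
  fin_cases k <;>
    simp only [planeAxis, Fin.zero_eta, Fin.mk_one, Fin.reduceFinMk, Fin.reduceEq, ↓reduceIte,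
      Fin.isValue] <;> norm_num

theorem inner_planeAxis {ξ : EuclideanSpace ℝ (Fin 3)} (hξ : ξ 0 + ξ 1 + ξ 2 = 0) (k : Fin 3) :
    ⟪ξ, planeAxis k⟫ = ξ k := by
  simp only [PiLp.inner_apply, Fin.sum_univ_three, planeAxis, RCLike.inner_apply, conj_trivial]
  fin_cases k <;>
    simp only [Fin.zero_eta, Fin.mk_one, Fin.reduceFinMk, Fin.reduceEq, ↓reduceIte, Fin.isValue] <;>
    linarith

theorem norm_planeAxis (k : Fin 3) : ‖planeAxis k‖ = √6 / 3 := by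
  have hk : planeAxis k k = 6 / 3 ^ 2 := by norm_num [planeAxis]
  rw [← sqrt_sq (norm_nonneg _), ← real_inner_self_eq_norm_sq, inner_planeAxis (planeAxis_sum k),
    hk, sqrt_div' _ (by positivity), sqrt_sq (by norm_num)]

theorem coord_eq_mul_cos_angle {ξ : EuclideanSpace ℝ (Fin 3)} (hξ : ξ 0 + ξ 1 + ξ 2 = 0)
    (k : Fin 3) : ξ k = √6 / 3 * ‖ξ‖ * cos (angle ξ (planeAxis k)) := by
  rw [← inner_planeAxis hξ, ← cos_angle_mul_norm_mul_norm, norm_planeAxis]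
  ring

theorem angle_planeAxis_of_ne {j k : Fin 3} (h : j ≠ k) :
    angle (planeAxis j) (planeAxis k) = 2 * π / 3 := by
  have hinner : ⟪planeAxis j, planeAxis k⟫ = -1 / 3 := by
    rw [real_inner_comm, inner_planeAxis (planeAxis_sum k)]
    simp [planeAxis, h]
  have hsqrt : √6 / 3 * (√6 / 3) = 2 / 3 := by
    rw [div_mul_div_comm, mul_self_sqrt (by norm_num)]; norm_num
  rw [angle, hinner, norm_planeAxis, norm_planeAxis, hsqrt,
    show (-1 / 3 : ℝ) / (2 / 3) = -(1 / 2) by norm_num, arccos_neg, ← cos_pi_div_three,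
    arccos_cos (by positivity) (by linarith [pi_pos])]
  ring

theorem angle_lt_or_angle_neg_lt_of_cos_lt_abs {ξ : EuclideanSpace ℝ (Fin 3)}
    (hξ : ξ 0 + ξ 1 + ξ 2 = 0) {k : Fin 3} {θ : ℝ} (hθ : 0 ≤ θ)
    (h : √6 / 3 * ‖ξ‖ * cos θ < |ξ k|) :
    angle ξ (planeAxis k) < θ ∨ angle ξ (-planeAxis k) < θ := by
  rw [coord_eq_mul_cos_angle hξ, abs_mul, abs_of_nonneg (by positivity)] at h
  have hcos := lt_of_mul_lt_mul_left h (by positivity)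
  rcases abs_cases (cos (angle ξ (planeAxis k))) with ⟨habs, -⟩ | ⟨habs, -⟩
  · exact .inl (angle_lt_of_cos_lt hθ (habs ▸ hcos))
  · refine .inr (angle_lt_of_cos_lt hθ ?_)
    rwa [angle_neg_right, cos_pi_sub, ← habs]

theorem angle_le_pi_div_three_of_lt {j₀ j : Fin 3} {c : EuclideanSpace ℝ (Fin 3)}
    (hc : c = planeAxis j₀ ∨ c = -planeAxis j₀) {θ : ℝ} (hθ : θ < π / 6)
    (h : angle c (planeAxis j) < θ + π / 2) : angle c (planeAxis j) ≤ π / 3 := by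
  have ha : planeAxis j₀ ≠ 0 := norm_ne_zero_iff.1 (by rw [norm_planeAxis]; positivity)
  rcases eq_or_ne j₀ j with rfl | hne <;> rcases hc with rfl | rfl
  · rw [angle_self ha]; positivity
  · rw [angle_neg_self_of_nonzero ha] at h; linarith [pi_pos]
  · rw [angle_planeAxis_of_ne hne] at h; linarith
  · rw [angle_neg_left, angle_planeAxis_of_ne hne]; linarith

theorem mul_cos_mul_norm_lt_coord {w u u' : EuclideanSpace ℝ (Fin 3)}
    (hw : w 0 + w 1 + w 2 = 0) (hu : u 0 + u 1 + u 2 = 0) (hu' : u' 0 + u' 1 + u' 2 = 0)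
    {j₀ j : Fin 3} {θ₀ θ₁ : ℝ} (hθ₀ : 0 ≤ θ₀) (hθ₀' : θ₀ < π / 6) (hθ₁ : 0 ≤ θ₁)
    (hθ : 2 * θ₀ + θ₁ ≤ π / 2)
    (hu_cone : √6 / 3 * ‖u‖ * cos θ₀ < |u j₀|) (hu'_cone : √6 / 3 * ‖u'‖ * cos θ₀ < |u' j₀|)
    (hwu : ‖w - u‖ < sin θ₁ * ‖w‖) (hwu' : ‖w - u'‖ < ‖w‖) (hj : 0 ≤ u' j) :
    √6 / 3 * cos (π / 3 + θ₀ + θ₁) * ‖w‖ < w j := by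
  obtain ⟨c, hc, hu'c⟩ : ∃ c, (c = planeAxis j₀ ∨ c = -planeAxis j₀) ∧ angle u' c < θ₀ := by
    rcases angle_lt_or_angle_neg_lt_of_cos_lt_abs hu' hθ₀ hu'_cone with h | h
    exacts [⟨_, .inl rfl, h⟩, ⟨_, .inr rfl, h⟩]
  have huc : angle u c < θ₀ ∨ angle u (-c) < θ₀ := by
    rcases hc with rfl | rfl
    · exact angle_lt_or_angle_neg_lt_of_cos_lt_abs hu hθ₀ hu_cone
    · rw [neg_neg]; exact (angle_lt_or_angle_neg_lt_of_cos_lt_abs hu hθ₀ hu_cone).symm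
  have hwu_angle : angle w u < θ₁ := angle_lt_of_norm_sub_lt_sin_mul hθ₁ hwu
  have hwu'_angle : angle w u' < π / 2 :=
    angle_lt_of_norm_sub_lt_sin_mul (by positivity) (by rwa [sin_pi_div_two, one_mul])
  have hwc : angle w c < θ₀ + θ₁ := angle_lt_add_of_double_cone huc hu'c hwu_angle hwu'_angle hθ
  have hu'b : angle u' (planeAxis j) ≤ π / 2 :=
    angle_le_pi_div_two_of_inner_nonneg (by rwa [inner_planeAxis hu'])
  have hcb : angle c (planeAxis j) ≤ π / 3 := by
    refine angle_le_pi_div_three_of_lt hc hθ₀' ?_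
    linarith [angle_le_angle_add_angle c u' (planeAxis j), angle_comm c u']
  have hwb : angle w (planeAxis j) < π / 3 + θ₀ + θ₁ := by
    linarith [angle_le_angle_add_angle w c (planeAxis j)]
  have hcos : cos (π / 3 + θ₀ + θ₁) < cos (angle w (planeAxis j)) :=
    cos_lt_cos_of_nonneg_of_le_pi (angle_nonneg _ _) (by linarith) hwb
  have hw0 : 0 < ‖w‖ := (norm_nonneg _).trans_lt hwu'
  rw [coord_eq_mul_cos_angle hw]
  linarith [mul_lt_mul_of_pos_left hcos (by positivity : 0 < √6 / 3 * ‖w‖)]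

theorem sub_coord_sum_eq_zero {x y : EuclideanSpace ℝ (Fin 3)} (hx : x 0 + x 1 + x 2 = 0)
    (hy : y 0 + y 1 + y 2 = 0) : (x - y) 0 + (x - y) 1 + (x - y) 2 = 0 := by
  simp only [PiLp.sub_apply]
  linarith

theorem whitney_difference_decomposition_general (θ₀ : ℝ) (hθ0 : 0 ≤ θ₀)
    (hθ6 : θ₀ < Real.pi / 6)
    (j₀ : Fin 3) (Γ : Set (EuclideanSpace ℝ (Fin 3)))
    (hΓV : Γ ⊆ {ξ : EuclideanSpace ℝ (Fin 3) | ξ 0 + ξ 1 + ξ 2 = 0})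
    (hcone : ∀ γ ∈ Γ, ∀ γ' ∈ Γ, γ ≠ γ' →
      Real.sqrt 6 / 3 * ‖γ - γ'‖ * Real.cos θ₀ < |(γ - γ') j₀|)
    (θ₁ δ₁ δ₂ : ℝ)
    (hθ₁ : θ₁ = Real.pi / 18 - θ₀ / 3)
    (hδ₁ : δ₁ = Real.sin θ₁)
    (hδ₂ : δ₂ = Real.sqrt 6 / 3 * Real.cos (Real.pi / 3 + θ₀ + θ₁))
    (t : ℝ)
    (γ γ' : EuclideanSpace ℝ (Fin 3)) (hγ : γ ∈ Γ) (hγ' : γ' ∈ Γ)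
    (j : Fin 3) (horder : γ j ≤ γ' j) :
    {β ∈ {ξ : EuclideanSpace ℝ (Fin 3) | ξ 0 + ξ 1 + ξ 2 = 0} |
        ‖β - γ'‖ ≤ (1 / δ₁) * infDist β Γ} \
      {β ∈ {ξ : EuclideanSpace ℝ (Fin 3) | ξ 0 + ξ 1 + ξ 2 = 0} |
        t ≤ ‖β - γ‖ ∧ ‖β - γ‖ ≤ (1 / δ₁) * infDist β Γ} ⊆
    Metric.ball γ t ∪
      {β ∈ {ξ : EuclideanSpace ℝ (Fin 3) | ξ 0 + ξ 1 + ξ 2 = 0} |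
        (‖β - γ'‖ ≤ (1 / δ₁) * infDist β Γ ∧ ¬ |β j - γ j| ≤ δ₂ * ‖β - γ‖) ∧
          γ j < β j} := by
  rintro β ⟨⟨hβV, hβW'⟩, hβW⟩
  rcases lt_or_ge ‖β - γ‖ t with hball | hfar
  · exact .inl (by rwa [mem_ball, dist_eq_norm])
  have hθ₁pos : 0 < θ₁ := by linarith
  have hδ₁pos : 0 < δ₁ := hδ₁ ▸ sin_pos_of_pos_of_lt_pi hθ₁pos (by linarith [pi_pos])
  have hδ₂nonneg : 0 ≤ δ₂ :=
    hδ₂ ▸ mul_nonneg (by positivity) (cos_nonneg_of_mem_Icc ⟨by linarith, by linarith⟩)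
  have hγ_far : 1 / δ₁ * infDist β Γ < ‖β - γ‖ := not_le.1 fun h => hβW ⟨hβV, hfar, h⟩
  obtain ⟨g, hg, hβg⟩ := (infDist_lt_iff ⟨γ, hγ⟩).1 <| show infDist β Γ < δ₁ * ‖β - γ‖ by
    rwa [one_div_mul_eq_div, div_lt_iff₀' hδ₁pos] at hγ_far
  have hgγ : g ≠ γ := by
    rintro rfl
    rw [dist_eq_norm] at hβg
    nlinarith [norm_nonneg (β - g), hδ₁ ▸ sin_le_one θ₁]
  have hβγ' : ‖β - γ'‖ < ‖β - γ‖ := hβW'.trans_lt hγ_far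
  have hγ'γ : γ' ≠ γ := by
    rintro rfl
    exact lt_irrefl _ hβγ'
  have hcoord := mul_cos_mul_norm_lt_coord (sub_coord_sum_eq_zero hβV (hΓV hγ))
    (sub_coord_sum_eq_zero (hΓV hg) (hΓV hγ)) (sub_coord_sum_eq_zero (hΓV hγ') (hΓV hγ))
    hθ0 hθ6 hθ₁pos.le (by linarith) (hcone g hg γ hγ hgγ) (hcone γ' hγ' γ hγ hγ'γ)
    (by rwa [sub_sub_sub_cancel_right, ← dist_eq_norm, ← hδ₁])
    (by rwa [sub_sub_sub_cancel_right]) (j := j) (by simpa using horder)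
  rw [← hδ₂, PiLp.sub_apply] at hcoord
  refine .inr ⟨hβV, ⟨hβW', not_le.2 (hcoord.trans_le (le_abs_self _))⟩, ?_⟩
  linarith [mul_nonneg hδ₂nonneg (norm_nonneg (β - γ))]

/-- `W_{γ',0} \ W_{γ,t} ⊆ B_t(γ) ∪ (W_{γ',0} \ U_γ^j)^{>γ_j}`. -/
theorem whitney_difference_decomposition (θ₀ : ℝ) (hθ0 : 0 ≤ θ₀)
    (hθ6 : θ₀ < Real.pi / 6)
    (j₀ : Fin 3) (Γ : Set (EuclideanSpace ℝ (Fin 3)))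
    (hΓV : Γ ⊆ {ξ : EuclideanSpace ℝ (Fin 3) | ξ 0 + ξ 1 + ξ 2 = 0})
    (hclosed : IsClosed Γ)
    (hcone : ∀ γ ∈ Γ, ∀ γ' ∈ Γ, γ ≠ γ' →
      Real.sqrt 6 / 3 * ‖γ - γ'‖ * Real.cos θ₀ < |(γ - γ') j₀|)
    (θ₁ δ₁ δ₂ : ℝ)
    (hθ₁ : θ₁ = Real.pi / 18 - θ₀ / 3)
    (hδ₁ : δ₁ = Real.sin θ₁)
    (hδ₂ : δ₂ = Real.sqrt 6 / 3 * Real.cos (Real.pi / 3 + θ₀ + θ₁))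
    (t : ℝ) (ht : 0 < t)
    (γ γ' : EuclideanSpace ℝ (Fin 3)) (hγ : γ ∈ Γ) (hγ' : γ' ∈ Γ)
    (j : Fin 3) (horder : γ j ≤ γ' j) :
    {β ∈ {ξ : EuclideanSpace ℝ (Fin 3) | ξ 0 + ξ 1 + ξ 2 = 0} |
        ‖β - γ'‖ ≤ (1 / δ₁) * infDist β Γ} \
      {β ∈ {ξ : EuclideanSpace ℝ (Fin 3) | ξ 0 + ξ 1 + ξ 2 = 0} |
        t ≤ ‖β - γ‖ ∧ ‖β - γ‖ ≤ (1 / δ₁) * infDist β Γ} ⊆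
    Metric.ball γ t ∪
      {β ∈ {ξ : EuclideanSpace ℝ (Fin 3) | ξ 0 + ξ 1 + ξ 2 = 0} |
        (‖β - γ'‖ ≤ (1 / δ₁) * infDist β Γ ∧ ¬ |β j - γ j| ≤ δ₂ * ‖β - γ‖) ∧
          γ j < β j} :=
  whitney_difference_decomposition_general θ₀ hθ0 hθ6 j₀ Γ hΓV hcone θ₁ δ₁ δ₂ hθ₁ hδ₁ hδ₂ t γ γ' hγ
    hγ' j horder
end

section
/- Let c := (4ε/10 + 1/δ₁)/(δ₂ - 4ε/10) where ε > 0 is small enough that 4ε/10 < δ₂. Let γ, γ' ∈ Γ with γ_j ≤ γ'_j. Suppose β ∈ W_{γ,0} \ U_γ^j with β_j < γ_j, and β' ∈ W_{γ',0}, and |β_j - β'_j| ≤ (4ε/10)(d_Γ(β) + d_Γ(β')). Then d_Γ(β) ≤ c·d_Γ(β'). -/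
/-!
Since `β` lies outside the cone `U_γ^j` and below `γ` in the `j`-th coordinate, the gap
`γ_j - β_j` is at least `δ₂ d_Γ(β)`; since `γ_j ≤ γ'_j`, so is `γ'_j - β_j`. Going from `β_j` to
`γ'_j` through `β'_j`, that gap is at most `|β_j - β'_j| + ‖β' - γ'‖`, which the overlap hypothesis
and `β' ∈ W_{γ',0}` bound by `(4ε/10)(d_Γ(β) + d_Γ(β')) + d_Γ(β')/δ₁`. Solving the resulting linear
inequality for `d_Γ(β)` gives the constant `c`.
-/

open Metric

lemma mul_infDist_le_of_mul_norm_sub_le {E : Type*} [SeminormedAddCommGroup E] {Γ : Set E}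
    {β γ : E} (hγ : γ ∈ Γ) {δ t : ℝ} (hδ : 0 ≤ δ) (h : δ * ‖β - γ‖ ≤ t) :
    δ * infDist β Γ ≤ t :=
  (mul_le_mul_of_nonneg_left (dist_eq_norm β γ ▸ infDist_le_dist_of_mem hγ) hδ).trans h

lemma abs_apply_sub_le_norm_sub {ι : Type*} [Fintype ι] (x y : EuclideanSpace ℝ ι) (j : ι) :
    |x j - y j| ≤ ‖x - y‖ := by
  simpa only [Real.norm_eq_abs, dist_eq_norm] using PiLp.dist_apply_le x y j

lemma le_div_mul_of_mul_le {a b δ η K : ℝ} (hδη : η < δ) (h : δ * a ≤ K * b + η * (a + b)) :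
    a ≤ (η + K) / (δ - η) * b := by
  rw [div_mul_eq_mul_div, le_div_iff₀ (sub_pos.mpr hδη)]
  linarith

theorem lacunary_scale_bound_general (Γ : Set (EuclideanSpace ℝ (Fin 3)))
    (δ₁ δ₂ : ℝ)
    (ε c : ℝ) (hε : 0 < ε) (hεδ : 4 * ε / 10 < δ₂)
    (hc : c = (4 * ε / 10 + 1 / δ₁) / (δ₂ - 4 * ε / 10))
    (γ γ' : EuclideanSpace ℝ (Fin 3)) (hγ : γ ∈ Γ)
    (j : Fin 3) (horder : γ j ≤ γ' j)
    (β β' : EuclideanSpace ℝ (Fin 3))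
    (hβU : ¬ |β j - γ j| ≤ δ₂ * ‖β - γ‖)
    (hβj : β j < γ j)
    (hβ'W : ‖β' - γ'‖ ≤ (1 / δ₁) * infDist β' Γ)
    (hoverlap : |β j - β' j| ≤ 4 * ε / 10 * (infDist β Γ + infDist β' Γ)) :
    infDist β Γ ≤ c * infDist β' Γ := by
  have hδ₂_nonneg : 0 ≤ δ₂ := by linarith
  have hgap : δ₂ * infDist β Γ ≤ γ' j - β j := by
    have := mul_infDist_le_of_mul_norm_sub_le hγ hδ₂_nonneg (not_le.mp hβU).le
    rw [abs_of_neg (sub_neg.mpr hβj)] at this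
    linarith
  rw [hc]
  refine le_div_mul_of_mul_le hεδ ?_
  calc δ₂ * infDist β Γ ≤ γ' j - β j := hgap
    _ = (γ' j - β' j) + (β' j - β j) := by ring
    _ ≤ ‖β' - γ'‖ + |β j - β' j| := by
      gcongr
      · exact (le_abs_self _).trans (norm_sub_rev β' γ' ▸ abs_apply_sub_le_norm_sub γ' β' j)
      · exact (le_abs_self _).trans_eq (abs_sub_comm _ _)
    _ ≤ 1 / δ₁ * infDist β' Γ + 4 * ε / 10 * (infDist β Γ + infDist β' Γ) :=
      add_le_add hβ'W hoverlap

/-- Lacunary scale bound: if `β ∈ W_{γ,0} \ U_γ^j` with `β_j < γ_j`, `β' ∈ W_{γ',0}`,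
`γ_j ≤ γ'_j` and the frequency intervals overlap, then `d_Γ(β) ≤ c·d_Γ(β')` with
`c = (4ε/10 + 1/δ₁)/(δ₂ - 4ε/10)`. -/
theorem lacunary_scale_bound (θ₀ : ℝ) (hθ0 : 0 ≤ θ₀) (hθ6 : θ₀ < Real.pi / 6)
    (j₀ : Fin 3) (Γ : Set (EuclideanSpace ℝ (Fin 3)))
    (hΓV : Γ ⊆ {ξ : EuclideanSpace ℝ (Fin 3) | ξ 0 + ξ 1 + ξ 2 = 0})
    (hclosed : IsClosed Γ)
    (hcone : ∀ γ ∈ Γ, ∀ γ' ∈ Γ, γ ≠ γ' →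
      Real.sqrt 6 / 3 * ‖γ - γ'‖ * Real.cos θ₀ < |(γ - γ') j₀|)
    (θ₁ δ₁ δ₂ : ℝ)
    (hθ₁ : θ₁ = Real.pi / 18 - θ₀ / 3)
    (hδ₁ : δ₁ = Real.sin θ₁)
    (hδ₂ : δ₂ = Real.sqrt 6 / 3 * Real.cos (Real.pi / 3 + θ₀ + θ₁))
    (ε c : ℝ) (hε : 0 < ε) (hεδ : 4 * ε / 10 < δ₂)
    (hc : c = (4 * ε / 10 + 1 / δ₁) / (δ₂ - 4 * ε / 10))
    (γ γ' : EuclideanSpace ℝ (Fin 3)) (hγ : γ ∈ Γ) (hγ' : γ' ∈ Γ)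
    (j : Fin 3) (horder : γ j ≤ γ' j)
    (β β' : EuclideanSpace ℝ (Fin 3))
    (hβV : β ∈ {ξ : EuclideanSpace ℝ (Fin 3) | ξ 0 + ξ 1 + ξ 2 = 0})
    (hβ'V : β' ∈ {ξ : EuclideanSpace ℝ (Fin 3) | ξ 0 + ξ 1 + ξ 2 = 0})
    (hβW : ‖β - γ‖ ≤ (1 / δ₁) * infDist β Γ)
    (hβU : ¬ |β j - γ j| ≤ δ₂ * ‖β - γ‖)
    (hβj : β j < γ j)
    (hβ'W : ‖β' - γ'‖ ≤ (1 / δ₁) * infDist β' Γ)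
    (hoverlap : |β j - β' j| ≤ 4 * ε / 10 * (infDist β Γ + infDist β' Γ)) :
    infDist β Γ ≤ c * infDist β' Γ :=
  lacunary_scale_bound_general Γ δ₁ δ₂ ε c hε hεδ hc γ γ' hγ j horder β β' hβU hβj hβ'W hoverlap
end

section
/- Under the hypotheses of the previous statement, if additionally β' ∉ U_{γ'}^j, then (δ₂ - (4ε/10)(1+c))·d_Γ(β') ≤ |β_j - γ'_j| ≤ (1/δ₁ + (4ε/10)(1+c))·d_Γ(β'), where c = (4ε/10 + 1/δ₁)/(δ₂ - 4ε/10). -/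
/-!
Writing `d = d_Γ(β)` and `d' = d_Γ(β')`, the cone conditions `β ∉ U_γ^j`, `β' ∉ U_{γ'}^j` and
the bound `|β'_j - γ'_j| ≤ d'/δ₁` trap `γ_j - β_j` between `δ₂ d` and `d'/δ₁ + (4ε/10)(d + d')`
(using `γ_j ≤ γ'_j`), whence `d ≤ c d'`. The overlap hypothesis then moves `β_j` by at most
`(4ε/10)(1 + c) d'` away from `β'_j`, and the triangle inequality transfers the two-sided
bound on `|β'_j - γ'_j|` to `|β_j - γ'_j|`.
-/

open Metric

lemma mul_infDist_lt_of_mul_norm_sub_lt {E : Type*} [SeminormedAddCommGroup E] {s : Set E}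
    {x y : E} {δ a : ℝ} (hy : y ∈ s) (hδ : 0 ≤ δ) (h : δ * ‖x - y‖ < a) :
    δ * infDist x s < a :=
  (mul_le_mul_of_nonneg_left (infDist_le_dist_of_mem hy) hδ).trans_lt (by rwa [dist_eq_norm])

lemma lacunary_scale_bound_s14 {a a' g g' d d' δ κ L : ℝ} (hag : a < g) (hgg' : g ≤ g')
    (hd : δ * d < |a - g|) (hd' : |a' - g'| ≤ L * d') (hov : |a - a'| ≤ κ * (d + d'))
    (hκδ : κ < δ) : d ≤ (κ + L) / (δ - κ) * d' := by
  rw [div_mul_eq_mul_div, le_div_iff₀ (sub_pos.2 hκδ)]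
  rw [abs_of_neg (sub_neg.2 hag)] at hd
  linarith [neg_abs_le (a' - g'), neg_abs_le (a - a')]

theorem lacunary_scale_comparability_general
    (Γ : Set (EuclideanSpace ℝ (Fin 3)))
    (δ₁ δ₂ : ℝ)
    (ε c : ℝ) (hε : 0 < ε) (hεδ : 4 * ε / 10 < δ₂)
    (hc : c = (4 * ε / 10 + 1 / δ₁) / (δ₂ - 4 * ε / 10))
    (γ γ' : EuclideanSpace ℝ (Fin 3)) (hγ : γ ∈ Γ) (hγ' : γ' ∈ Γ)
    (j : Fin 3) (horder : γ j ≤ γ' j)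
    (β β' : EuclideanSpace ℝ (Fin 3))
    (hβU : ¬ |β j - γ j| ≤ δ₂ * ‖β - γ‖)
    (hβj : β j < γ j)
    (hβ'W : ‖β' - γ'‖ ≤ (1 / δ₁) * infDist β' Γ)
    (hβ'U : ¬ |β' j - γ' j| ≤ δ₂ * ‖β' - γ'‖)
    (hoverlap : |β j - β' j| ≤ 4 * ε / 10 * (infDist β Γ + infDist β' Γ)) :
    (δ₂ - 4 * ε / 10 * (1 + c)) * infDist β' Γ ≤ |β j - γ' j| ∧
      |β j - γ' j| ≤ (1 / δ₁ + 4 * ε / 10 * (1 + c)) * infDist β' Γ := by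
  have hκ : 0 ≤ 4 * ε / 10 := by positivity
  have hδ₂ : 0 ≤ δ₂ := hκ.trans hεδ.le
  have hβ'_upper : |β' j - γ' j| ≤ 1 / δ₁ * infDist β' Γ :=
    (PiLp.norm_apply_le (β' - γ') j).trans hβ'W
  have hβ'_lower : δ₂ * infDist β' Γ < |β' j - γ' j| :=
    mul_infDist_lt_of_mul_norm_sub_lt hγ' hδ₂ (not_le.1 hβ'U)
  have hscale : infDist β Γ ≤ c * infDist β' Γ := hc ▸ lacunary_scale_bound_s14 hβj horder
    (mul_infDist_lt_of_mul_norm_sub_lt hγ hδ₂ (not_le.1 hβU)) hβ'_upper hoverlap hεδ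
  have hshift : |β j - β' j| ≤ 4 * ε / 10 * (1 + c) * infDist β' Γ := by
    linarith [mul_le_mul_of_nonneg_left hscale hκ]
  constructor
  · linarith [abs_sub_le (β' j) (β j) (γ' j), abs_sub_comm (β' j) (β j)]
  · linarith [abs_sub_le (β j) (β' j) (γ' j)]

/-- Lacunary scale comparability: under the hypotheses of the lacunary scale bound and
additionally `β' ∉ U_{γ'}^j`, one has
`(δ₂ - (4ε/10)(1+c))·d_Γ(β') ≤ |β_j - γ'_j| ≤ (1/δ₁ + (4ε/10)(1+c))·d_Γ(β')`. -/
theorem lacunary_scale_comparability (θ₀ : ℝ) (hθ0 : 0 ≤ θ₀) (hθ6 : θ₀ < Real.pi / 6)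
    (j₀ : Fin 3) (Γ : Set (EuclideanSpace ℝ (Fin 3)))
    (hΓV : Γ ⊆ {ξ : EuclideanSpace ℝ (Fin 3) | ξ 0 + ξ 1 + ξ 2 = 0})
    (hclosed : IsClosed Γ)
    (hcone : ∀ γ ∈ Γ, ∀ γ' ∈ Γ, γ ≠ γ' →
      Real.sqrt 6 / 3 * ‖γ - γ'‖ * Real.cos θ₀ < |(γ - γ') j₀|)
    (θ₁ δ₁ δ₂ : ℝ)
    (hθ₁ : θ₁ = Real.pi / 18 - θ₀ / 3)
    (hδ₁ : δ₁ = Real.sin θ₁)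
    (hδ₂ : δ₂ = Real.sqrt 6 / 3 * Real.cos (Real.pi / 3 + θ₀ + θ₁))
    (ε c : ℝ) (hε : 0 < ε) (hεδ : 4 * ε / 10 < δ₂)
    (hc : c = (4 * ε / 10 + 1 / δ₁) / (δ₂ - 4 * ε / 10))
    (hεδ' : 4 * ε / 10 * (1 + c) < δ₂)
    (γ γ' : EuclideanSpace ℝ (Fin 3)) (hγ : γ ∈ Γ) (hγ' : γ' ∈ Γ)
    (j : Fin 3) (horder : γ j ≤ γ' j)
    (β β' : EuclideanSpace ℝ (Fin 3))
    (hβV : β ∈ {ξ : EuclideanSpace ℝ (Fin 3) | ξ 0 + ξ 1 + ξ 2 = 0})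
    (hβ'V : β' ∈ {ξ : EuclideanSpace ℝ (Fin 3) | ξ 0 + ξ 1 + ξ 2 = 0})
    (hβW : ‖β - γ‖ ≤ (1 / δ₁) * infDist β Γ)
    (hβU : ¬ |β j - γ j| ≤ δ₂ * ‖β - γ‖)
    (hβj : β j < γ j)
    (hβ'W : ‖β' - γ'‖ ≤ (1 / δ₁) * infDist β' Γ)
    (hβ'U : ¬ |β' j - γ' j| ≤ δ₂ * ‖β' - γ'‖)
    (hoverlap : |β j - β' j| ≤ 4 * ε / 10 * (infDist β Γ + infDist β' Γ)) :
    (δ₂ - 4 * ε / 10 * (1 + c)) * infDist β' Γ ≤ |β j - γ' j| ∧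
      |β j - γ' j| ≤ (1 / δ₁ + 4 * ε / 10 * (1 + c)) * infDist β' Γ :=
  lacunary_scale_comparability_general Γ δ₁ δ₂ ε c hε hεδ hc γ γ' hγ hγ' j horder β β' hβU hβj hβ'W
    hβ'U hoverlap
end

section
/- Let {(α_k, d_k)}_{k∈S} be a countable family with α_k ∈ ℝ, d_k > 0, such that for all distinct k, k' ∈ S, |α_k - α_{k'}| ≥ 2(d_k^{-1} + d_{k'}^{-1}). Fix (α, d) with d ≤ d_k for all k ∈ S and α equal to one of the α_k (say the family includes the base point). Then for N ≥ 2, Σ_{k ∈ S, (α_k,d_k) ≠ (α,d)} (d/d_k)·(1 + d|α - α_k|)^{-N} ≤ C(N), with C(N) independent of the family. -/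
open MeasureTheory

/-- Separated wave-packet summation: for a countable family with separation
`|α_k - α_{k'}| ≥ 2(d_k⁻¹ + d_{k'}⁻¹)` and a base point `k₀` of minimal scale,
`∑_{k ≠ k₀} (d_{k₀}/d_k)(1 + d_{k₀}|α_{k₀} - α_k|)^{-N} ≤ C(N)` with `C(N)`
independent of the family. -/
theorem separated_wave_packet_sum (N : ℕ) (hN : 2 ≤ N) :
    ∃ C : ℝ, 0 < C ∧
      ∀ (ι : Type) [Countable ι] (α d : ι → ℝ),
        (∀ k, 0 < d k) →
        (∀ k k' : ι, k ≠ k' → 2 * ((d k)⁻¹ + (d k')⁻¹) ≤ |α k - α k'|) →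
        ∀ k₀ : ι, (∀ k, d k₀ ≤ d k) →
          (∑' k : {k : ι // k ≠ k₀},
              ENNReal.ofReal
                (d k₀ / d k.1 * ((1 + d k₀ * |α k₀ - α k.1|) ^ N)⁻¹))
            ≤ ENNReal.ofReal C := by
  refine ⟨2 ^ N * Real.pi, by positivity, ?_⟩
  intro ι _ α d hd hsep k₀ hmin
  have hd₀ : 0 < d k₀ := hd k₀
  set g : ℝ → ENNReal := fun x => ENNReal.ofReal (d k₀ * ((1 + d k₀ * |α k₀ - x|) ^ N)⁻¹) with hg
  have hgc : Continuous fun x : ℝ => d k₀ * ((1 + d k₀ * |α k₀ - x|) ^ N)⁻¹ := by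
    refine continuous_const.mul (Continuous.inv₀ ?_ ?_)
    · exact (continuous_const.add
        (continuous_const.mul (continuous_const.sub continuous_id).abs)).pow N
    · intro x
      have : (0:ℝ) < 1 + d k₀ * |α k₀ - x| := by positivity
      positivity
  have hgm : Measurable g := ENNReal.measurable_ofReal.comp hgc.measurable
  set I : {k : ι // k ≠ k₀} → Set ℝ :=
    fun k => Set.Icc (α k.1 - (d k.1)⁻¹) (α k.1 + (d k.1)⁻¹) with hI
  -- the intervals are pairwise disjoint
  have hdisj : Pairwise (Function.onFun Disjoint I) := by
    intro j k hjk
    rw [Function.onFun, Set.disjoint_left]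
    intro x hxj hxk
    simp only [hI, Set.mem_Icc] at hxj hxk
    have h1 : |α j.1 - x| ≤ (d j.1)⁻¹ := by rw [abs_le]; constructor <;> linarith
    have h2 : |x - α k.1| ≤ (d k.1)⁻¹ := by rw [abs_le]; constructor <;> linarith
    have h3 := abs_sub_le (α j.1) x (α k.1)
    have h4 := hsep j.1 k.1 (fun h => hjk (Subtype.ext h))
    have h5 : (0:ℝ) < (d j.1)⁻¹ + (d k.1)⁻¹ :=
      add_pos (inv_pos.mpr (hd j.1)) (inv_pos.mpr (hd k.1))
    linarith
  -- termwise bound by the integral over the interval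
  have hterm : ∀ k : {k : ι // k ≠ k₀},
      ENNReal.ofReal (d k₀ / d k.1 * ((1 + d k₀ * |α k₀ - α k.1|) ^ N)⁻¹)
        ≤ ENNReal.ofReal (2 ^ N) * ∫⁻ x in I k, g x := by
    intro k
    set A := |α k₀ - α k.1| with hA
    have hA0 : 0 ≤ A := abs_nonneg _
    have hdk := hd k.1
    have hBpos : (0:ℝ) < 1 + d k₀ * A := by positivity
    set c : ℝ := d k₀ * ((1 + d k₀ * A) ^ N)⁻¹ * (2 ^ N)⁻¹ with hc
    have hcle : ∀ x ∈ I k, ENNReal.ofReal c ≤ g x := by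
      intro x hx
      simp only [hI, Set.mem_Icc] at hx
      refine ENNReal.ofReal_le_ofReal ?_
      have hxk : |α k.1 - x| ≤ (d k.1)⁻¹ := by rw [abs_le]; constructor <;> linarith
      have hdd : d k₀ * (d k.1)⁻¹ ≤ 1 := by
        rw [← div_eq_mul_inv, div_le_one hdk]; exact hmin k.1
      have h2 : 1 + d k₀ * |α k₀ - x| ≤ 2 * (1 + d k₀ * A) := by
        have h6 : |α k₀ - x| ≤ A + (d k.1)⁻¹ := by
          calc |α k₀ - x| ≤ |α k₀ - α k.1| + |α k.1 - x| := abs_sub_le _ _ _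
            _ ≤ A + (d k.1)⁻¹ := by rw [hA]; linarith
        nlinarith [hd₀.le]
      have h3 : (1 + d k₀ * |α k₀ - x|) ^ N ≤ (2 * (1 + d k₀ * A)) ^ N :=
        pow_le_pow_left₀ (by positivity) h2 N
      have h4 : ((2 * (1 + d k₀ * A)) ^ N)⁻¹ ≤ ((1 + d k₀ * |α k₀ - x|) ^ N)⁻¹ := by
        apply inv_anti₀ (by positivity) h3
      have h5 : ((2 * (1 + d k₀ * A)) ^ N)⁻¹
          = ((1 + d k₀ * A) ^ N)⁻¹ * ((2:ℝ) ^ N)⁻¹ := by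
        rw [mul_pow, mul_inv, mul_comm]
      rw [hc, mul_assoc, ← h5]
      exact mul_le_mul_of_nonneg_left h4 hd₀.le
    have hvol : volume (I k) = ENNReal.ofReal (2 * (d k.1)⁻¹) := by
      rw [hI]; rw [Real.volume_Icc]; congr 1; ring
    have hlow : ENNReal.ofReal c * ENNReal.ofReal (2 * (d k.1)⁻¹) ≤ ∫⁻ x in I k, g x := by
      rw [← hvol, ← setLIntegral_const (I k) (ENNReal.ofReal c)]
      exact setLIntegral_mono hgm hcle
    have hcnn : 0 ≤ c := by positivity
    calc ENNReal.ofReal (d k₀ / d k.1 * ((1 + d k₀ * A) ^ N)⁻¹)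
        ≤ ENNReal.ofReal (2 ^ N * (c * (2 * (d k.1)⁻¹))) := by
          apply ENNReal.ofReal_le_ofReal
          have h2N : (0:ℝ) < 2 ^ N := by positivity
          have heq : (2:ℝ) ^ N * (c * (2 * (d k.1)⁻¹))
              = 2 * (d k₀ * (d k.1)⁻¹ * ((1 + d k₀ * A) ^ N)⁻¹) := by
            rw [hc]; field_simp
          rw [heq, div_eq_mul_inv, mul_right_comm]
          have hX : 0 ≤ d k₀ * (d k.1)⁻¹ * ((1 + d k₀ * A) ^ N)⁻¹ := by positivity
          linarith
      _ = ENNReal.ofReal (2 ^ N) * (ENNReal.ofReal c * ENNReal.ofReal (2 * (d k.1)⁻¹)) := by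
          rw [ENNReal.ofReal_mul (by positivity), ENNReal.ofReal_mul hcnn]
      _ ≤ ENNReal.ofReal (2 ^ N) * ∫⁻ x in I k, g x := mul_le_mul_right hlow _
  -- the full integral after rescaling
  have hint : ∫⁻ x, g x = ∫⁻ y, ENNReal.ofReal (((1 + |y|) ^ N)⁻¹) := by
    set h : ℝ → ENNReal := fun y => ENNReal.ofReal (((1 + |y|) ^ N)⁻¹) with hh
    have hhc : Continuous fun y : ℝ => ((1 + |y|) ^ N)⁻¹ := by
      refine Continuous.inv₀ ((continuous_const.add continuous_abs).pow N) ?_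
      intro y
      have : (0:ℝ) < 1 + |y| := by positivity
      positivity
    have hhm : Measurable h := ENNReal.measurable_ofReal.comp hhc.measurable
    have hgeq : ∀ x : ℝ, g x = ENNReal.ofReal (d k₀) * h (d k₀ * (α k₀ - x)) := by
      intro x
      rw [hg, hh]
      simp only
      rw [← ENNReal.ofReal_mul hd₀.le]
      congr 2
      rw [abs_mul, abs_of_pos hd₀]
    have hm1 : Measurable fun x : ℝ => α k₀ - x := by fun_prop
    have hm2 : Measurable fun y : ℝ => d k₀ * y := by fun_prop
    have hmφ : Measurable fun x : ℝ => d k₀ * (α k₀ - x) := by fun_prop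
    have hmhφ : Measurable fun x : ℝ => h (d k₀ * (α k₀ - x)) := hhm.comp hmφ
    have hmap : Measure.map (fun x : ℝ => d k₀ * (α k₀ - x)) volume
        = ENNReal.ofReal (d k₀)⁻¹ • volume := by
      have hcomp : (fun x : ℝ => d k₀ * (α k₀ - x))
          = (fun y : ℝ => d k₀ * y) ∘ (fun x : ℝ => α k₀ - x) := rfl
      rw [hcomp, ← Measure.map_map hm2 hm1]
      rw [(Measure.measurePreserving_sub_left volume (α k₀)).map_eq,
        Real.map_volume_mul_left (ne_of_gt hd₀), abs_of_pos (inv_pos.mpr hd₀)]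
    calc ∫⁻ x, g x = ∫⁻ x, ENNReal.ofReal (d k₀) * h (d k₀ * (α k₀ - x)) := by
          simp only [hgeq]
      _ = ENNReal.ofReal (d k₀) * ∫⁻ x, h (d k₀ * (α k₀ - x)) := by
          rw [lintegral_const_mul _ hmhφ]
      _ = ENNReal.ofReal (d k₀) * ∫⁻ y, h y ∂(Measure.map (fun x : ℝ => d k₀ * (α k₀ - x)) volume) := by
          rw [lintegral_map hhm hmφ]
      _ = ENNReal.ofReal (d k₀) * (ENNReal.ofReal (d k₀)⁻¹ * ∫⁻ y, h y) := by
          rw [hmap, lintegral_smul_measure, smul_eq_mul]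
      _ = ∫⁻ y, h y := by
          rw [← mul_assoc, ← ENNReal.ofReal_mul hd₀.le, mul_inv_cancel₀ (ne_of_gt hd₀),
            ENNReal.ofReal_one, one_mul]
  have hpi : ∫⁻ y : ℝ, ENNReal.ofReal (((1 + |y|) ^ N)⁻¹) ≤ ENNReal.ofReal Real.pi := by
    calc ∫⁻ y : ℝ, ENNReal.ofReal (((1 + |y|) ^ N)⁻¹)
        ≤ ∫⁻ y : ℝ, ENNReal.ofReal ((1 + y ^ 2)⁻¹) := by
          refine lintegral_mono fun y => ENNReal.ofReal_le_ofReal ?_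
          have hy : (0:ℝ) ≤ |y| := abs_nonneg y
          have h1 : (1 + |y|) ^ 2 ≤ (1 + |y|) ^ N := pow_le_pow_right₀ (by linarith) hN
          have h2 : 1 + y ^ 2 ≤ (1 + |y|) ^ N := by nlinarith [sq_abs y]
          exact inv_anti₀ (by positivity) h2
      _ = ENNReal.ofReal Real.pi := by
          rw [← ofReal_integral_eq_lintegral_ofReal integrable_inv_one_add_sq
            (Filter.Eventually.of_forall fun y => by positivity),
            integral_univ_inv_one_add_sq]
  calc (∑' k : {k : ι // k ≠ k₀},
        ENNReal.ofReal (d k₀ / d k.1 * ((1 + d k₀ * |α k₀ - α k.1|) ^ N)⁻¹))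
      ≤ ∑' k : {k : ι // k ≠ k₀}, ENNReal.ofReal (2 ^ N) * ∫⁻ x in I k, g x :=
        ENNReal.tsum_le_tsum hterm
    _ = ENNReal.ofReal (2 ^ N) * ∑' k : {k : ι // k ≠ k₀}, ∫⁻ x in I k, g x :=
        ENNReal.tsum_mul_left
    _ = ENNReal.ofReal (2 ^ N) * ∫⁻ x in ⋃ k, I k, g x := by
        rw [lintegral_iUnion (fun k => measurableSet_Icc) hdisj]
    _ ≤ ENNReal.ofReal (2 ^ N) * ∫⁻ x, g x :=
        mul_le_mul_right (setLIntegral_le_lintegral _ _) _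
    _ = ENNReal.ofReal (2 ^ N) * ∫⁻ y, ENNReal.ofReal (((1 + |y|) ^ N)⁻¹) := by rw [hint]
    _ ≤ ENNReal.ofReal (2 ^ N) * ENNReal.ofReal Real.pi := mul_le_mul_right hpi _
    _ = ENNReal.ofReal (2 ^ N * Real.pi) := (ENNReal.ofReal_mul (by positivity)).symm
end

section
/- Let a₁ ≥ a₂ ≥ a₃ > 0 and for each positive a let n(a) be the integer with 2^{n(a)-1} < a^{-1/2} ≤ 2^{n(a)}; write n_i = n(a_i) so n₁ ≤ n₂ ≤ n₃. Then Σ_{n ≤ n₃} 2^{-2n} · min(2^n, 2^{n₁}) · min(2^n, 2^{n₂}) · min(2^n, 2^{n₃}) ≤ C · a₁^{-1/2} · (2 + log(a₁/a₂)) for an absolute constant C. -/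
/-!
Every term is bounded by each of `2ⁿ`, `2^{n₁}` and `2^{n₁+n₂-n}`, whatever `n` is; summing the
first over `n ≤ n₁`, the second over `n₁ < n ≤ n₂` and the third over `n > n₂` gives
`2^{n₁} (3 + (n₂ - n₁)⁺)` for every finite set of indices. Then `2^{n₁} < 2 a₁^{-1/2}`, and comparing
`2^{n₂-1} < a₂^{-1/2}` with `a₁^{-1/2} ≤ 2^{n₁}` gives `n₂ - n₁ - 1 < log(a₁/a₂) / (2 log 2)`.
-/

open Finset Real

theorem sum_two_zpow_le {s : Finset ℤ} {m : ℤ} (hs : ∀ n ∈ s, n ≤ m) :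
    ∑ n ∈ s, (2 : ℝ) ^ n ≤ 2 ^ (m + 1) := by
  have hinj : Set.InjOn (fun n => (m - n).toNat) s := fun a ha b hb hab => by
    have := hs a ha; have := hs b hb; simp only at hab; omega
  calc ∑ n ∈ s, (2 : ℝ) ^ n
      = 2 ^ m * ∑ k ∈ s.image (fun n => (m - n).toNat), (1 / 2 : ℝ) ^ k := by
        rw [sum_image hinj, mul_sum]
        refine sum_congr rfl fun n hn => ?_
        rw [one_div, inv_pow, ← zpow_natCast, Int.toNat_of_nonneg (by linarith [hs n hn]),
          ← zpow_neg, ← zpow_add₀ two_ne_zero]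
        ring_nf
    _ ≤ 2 ^ m * ∑' k : ℕ, (1 / 2 : ℝ) ^ k := by
        gcongr
        exact summable_geometric_two.sum_le_tsum _ fun _ _ => by positivity
    _ = 2 ^ (m + 1) := by rw [tsum_geometric_two, zpow_add_one₀ two_ne_zero]

theorem sum_two_zpow_sub_le {s : Finset ℤ} {k m : ℤ} (hs : ∀ n ∈ s, m ≤ n) :
    ∑ n ∈ s, (2 : ℝ) ^ (k - n) ≤ 2 ^ (k - m + 1) := by
  rw [← sum_image fun _ _ _ _ h => sub_right_injective h]
  refine sum_two_zpow_le fun j hj => ?_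
  obtain ⟨n, hn, rfl⟩ := mem_image.mp hj
  linarith [hs n hn]

noncomputable def dyadicTerm (n₁ n₂ n₃ n : ℤ) : ℝ :=
  (2 : ℝ) ^ (-2 * n) * min ((2 : ℝ) ^ n) (2 ^ n₁) * min ((2 : ℝ) ^ n) (2 ^ n₂) *
    min ((2 : ℝ) ^ n) (2 ^ n₃)

section dyadicTerm

variable (n₁ n₂ n₃ n : ℤ)

theorem dyadicTerm_le_zpow : dyadicTerm n₁ n₂ n₃ n ≤ 2 ^ n := by
  calc dyadicTerm n₁ n₂ n₃ n ≤ (2 : ℝ) ^ (-2 * n) * 2 ^ n * 2 ^ n * 2 ^ n := by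
        unfold dyadicTerm; gcongr <;> exact min_le_left _ _
    _ = 2 ^ n := by simp only [← zpow_add₀ (two_ne_zero' ℝ)]; ring_nf

theorem dyadicTerm_le_zpow_left : dyadicTerm n₁ n₂ n₃ n ≤ 2 ^ n₁ := by
  calc dyadicTerm n₁ n₂ n₃ n ≤ (2 : ℝ) ^ (-2 * n) * 2 ^ n₁ * 2 ^ n * 2 ^ n := by
        unfold dyadicTerm; gcongr
        · exact min_le_right _ _
        all_goals exact min_le_left _ _
    _ = 2 ^ n₁ := by simp only [← zpow_add₀ (two_ne_zero' ℝ)]; ring_nf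

theorem dyadicTerm_le_zpow_add_sub : dyadicTerm n₁ n₂ n₃ n ≤ 2 ^ (n₁ + n₂ - n) := by
  calc dyadicTerm n₁ n₂ n₃ n ≤ (2 : ℝ) ^ (-2 * n) * 2 ^ n₁ * 2 ^ n₂ * 2 ^ n := by
        unfold dyadicTerm; gcongr
        · exact min_le_right _ _
        · exact min_le_right _ _
        · exact min_le_left _ _
    _ = 2 ^ (n₁ + n₂ - n) := by simp only [← zpow_add₀ (two_ne_zero' ℝ)]; ring_nf

end dyadicTerm

theorem sum_dyadicTerm_le (n₁ n₂ n₃ : ℤ) (s : Finset ℤ) :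
    ∑ n ∈ s, dyadicTerm n₁ n₂ n₃ n ≤ 2 ^ n₁ * (3 + (n₂ - n₁).toNat) := by
  rw [← sum_filter_add_sum_filter_not s (· ≤ n₁),
    ← sum_filter_add_sum_filter_not (s.filter (¬ · ≤ n₁)) (· ≤ n₂)]
  have low : ∑ n ∈ s.filter (· ≤ n₁), dyadicTerm n₁ n₂ n₃ n ≤ 2 ^ (n₁ + 1) :=
    (sum_le_sum fun n _ => dyadicTerm_le_zpow ..).trans
      (sum_two_zpow_le fun n hn => (mem_filter.mp hn).2)
  have mid : ∑ n ∈ (s.filter (¬ · ≤ n₁)).filter (· ≤ n₂), dyadicTerm n₁ n₂ n₃ n ≤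
      (n₂ - n₁).toNat * 2 ^ n₁ := by
    refine (sum_le_card_nsmul _ _ _ fun n _ => dyadicTerm_le_zpow_left ..).trans ?_
    rw [nsmul_eq_mul, ← Int.card_Ioc]
    gcongr
    intro n hn
    simp only [mem_filter] at hn
    exact mem_Ioc.mpr ⟨not_le.mp hn.1.2, hn.2⟩
  have high : ∑ n ∈ (s.filter (¬ · ≤ n₁)).filter (¬ · ≤ n₂), dyadicTerm n₁ n₂ n₃ n ≤
      2 ^ (n₁ + n₂ - (n₂ + 1) + 1) :=
    (sum_le_sum fun n _ => dyadicTerm_le_zpow_add_sub ..).trans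
      (sum_two_zpow_sub_le fun n hn => Int.add_one_le_of_lt (not_le.mp (mem_filter.mp hn).2))
  rw [zpow_add_one₀ two_ne_zero] at low
  rw [show n₁ + n₂ - (n₂ + 1) + 1 = n₁ by ring] at high
  linarith

theorem sub_sub_one_mul_log_two_lt {x y : ℝ} {m n : ℤ} (hx : 0 < x) (hm : x ≤ 2 ^ m)
    (hn : 2 ^ (n - 1) < y) : ((n - m - 1 : ℤ) : ℝ) * log 2 < log (y / x) := by
  rw [← Real.log_zpow]
  refine log_lt_log (by positivity) ?_
  calc (2 : ℝ) ^ (n - m - 1) = 2 ^ (n - 1) / 2 ^ m := by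
        rw [← zpow_sub₀ two_ne_zero]; ring_nf
    _ < y / x := div_lt_div₀ hn hm ((zpow_pos two_pos _).trans hn).le hx

theorem toNat_sub_le_one_add_log {a₁ a₂ : ℝ} {n₁ n₂ : ℤ} (ha₂ : 0 < a₂) (h₂₁ : a₂ ≤ a₁)
    (h₁ : a₁ ^ (-(1 : ℝ) / 2) ≤ 2 ^ n₁) (h₂ : 2 ^ (n₂ - 1) < a₂ ^ (-(1 : ℝ) / 2)) :
    ((n₂ - n₁).toNat : ℝ) ≤ 1 + log (a₁ / a₂) := by
  have ha₁ := ha₂.trans_le h₂₁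
  have hL : 0 ≤ log (a₁ / a₂) := log_nonneg ((one_le_div ha₂).mpr h₂₁)
  rw [log_div ha₁.ne' ha₂.ne'] at hL ⊢
  have hgap := sub_sub_one_mul_log_two_lt (rpow_pos_of_pos ha₁ _) h₁ h₂
  rw [log_div (rpow_pos_of_pos ha₂ _).ne' (rpow_pos_of_pos ha₁ _).ne', log_rpow ha₂,
    log_rpow ha₁] at hgap
  have hlog2 : 1 / 2 < log 2 := by linarith [log_two_gt_d9]
  have hcast : ((n₂ - n₁).toNat : ℝ) = max ((n₂ - n₁ : ℤ) : ℝ) 0 := by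
    exact_mod_cast Int.toNat_eq_max _
  rw [hcast]
  push_cast at hgap ⊢
  refine max_le ?_ (by linarith)
  nlinarith

/-- The final summation in the proof of the model form bound:
`Σ_{n ≤ n₃} 2^{-2n} min(2ⁿ,2^{n₁}) min(2ⁿ,2^{n₂}) min(2ⁿ,2^{n₃})
  ≤ C·a₁^{-1/2}·(2 + log(a₁/a₂))` for an absolute constant `C`. -/
theorem model_form_summation :
    ∃ C : ℝ, 0 < C ∧
      ∀ (a₁ a₂ a₃ : ℝ) (n₁ n₂ n₃ : ℤ),
        0 < a₃ → a₃ ≤ a₂ → a₂ ≤ a₁ →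
        (2 : ℝ) ^ (n₁ - 1) < a₁ ^ (-(1 : ℝ) / 2) →
        a₁ ^ (-(1 : ℝ) / 2) ≤ (2 : ℝ) ^ n₁ →
        (2 : ℝ) ^ (n₂ - 1) < a₂ ^ (-(1 : ℝ) / 2) →
        a₂ ^ (-(1 : ℝ) / 2) ≤ (2 : ℝ) ^ n₂ →
        (2 : ℝ) ^ (n₃ - 1) < a₃ ^ (-(1 : ℝ) / 2) →
        a₃ ^ (-(1 : ℝ) / 2) ≤ (2 : ℝ) ^ n₃ →
        (∑' n : {n : ℤ // n ≤ n₃},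
            (2 : ℝ) ^ (-2 * n.1) *
              min ((2 : ℝ) ^ n.1) ((2 : ℝ) ^ n₁) *
              min ((2 : ℝ) ^ n.1) ((2 : ℝ) ^ n₂) *
              min ((2 : ℝ) ^ n.1) ((2 : ℝ) ^ n₃))
          ≤ C * a₁ ^ (-(1 : ℝ) / 2) * (2 + Real.log (a₁ / a₂)) := by
  refine ⟨4, by norm_num, fun a₁ a₂ a₃ n₁ n₂ n₃ ha₃ h₃₂ h₂₁ h₁l h₁r h₂l _ _ _ => ?_⟩
  have ha₂ := ha₃.trans_le h₃₂
  have hA₁ : 0 ≤ a₁ ^ (-(1 : ℝ) / 2) := rpow_nonneg (ha₂.le.trans h₂₁) _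
  have hL : 0 ≤ log (a₁ / a₂) := log_nonneg ((one_le_div ha₂).mpr h₂₁)
  have hA : (2 : ℝ) ^ n₁ ≤ 2 * a₁ ^ (-(1 : ℝ) / 2) := by
    rw [← sub_add_cancel n₁ 1, zpow_add_one₀ two_ne_zero]
    linarith
  have hgap := toNat_sub_le_one_add_log ha₂ h₂₁ h₁r h₂l
  calc _ ≤ (2 : ℝ) ^ n₁ * (3 + (n₂ - n₁).toNat) := by
        refine tsum_le_of_sum_le' (by positivity) fun s => ?_
        have := sum_dyadicTerm_le n₁ n₂ n₃ (s.map (.subtype _))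
        rwa [sum_map] at this
    _ ≤ 2 * a₁ ^ (-(1 : ℝ) / 2) * (4 + log (a₁ / a₂)) :=
        mul_le_mul hA (by linarith) (by positivity) (by positivity)
    _ ≤ 4 * a₁ ^ (-(1 : ℝ) / 2) * (2 + log (a₁ / a₂)) := by
        nlinarith
end
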